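/- arXiv:1507.02980 — 9 statements merged into one kernel-verified Lean document; each statement's English description precedes it below -/
import Mathlib

section
/- Let d = 4N for an integer N ≥ 1, and let γ, ξ, η, D > 0 with kernel C(z) = γξ e^{-ηz}/(4πDz) for z > 0. Fix y₀ ∈ ℝ^d and a, b > 0. Suppose q : ℝ^d → ℝ^d is continuous and satisfies ‖q(y₁) - q(y₂)‖ ≤ L₁‖y₁ - y₂‖ for all y₁, y₂ in the closed ball B̄(y₀, b), and p : (0,∞) × ℝ^d × ℝ^d → ℝ^d is continuous with ‖p(h, u, v)‖ ≤ M̄√(2N)·√(4Dh) for all h > 0 and all u, v ∈ B̄(y₀, b), and ‖p(h, u₁, v₁) - p(h, u₂, v₂)‖ ≤ √(4Dh)·L₂(‖u₁ - u₂‖ + ‖v₁ - v₂‖) for all h > 0 and u₁, u₂, v₁, v₂ ∈ B̄(y₀, b), where L₁, L₂, M̄ > 0. Let M₁ = sup of ‖q(y)‖ over B̄(y₀, b), M₂ = sup over 0 ≤ τ ≤ t ≤ a and y-values in B̄(y₀, b) of ‖∫_τ^t C(s-τ) p(s-τ, y(s), y(τ)) ds‖, M = ∫₀^∞ C(z)√(4Dz)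 dz, and T = min(a, b/(M₁+M₂), 1/(L₁ + 2L₂M)). Then the integral equation y(t) = y₀ + ∫₀^t [q(y(τ)) + ∫_τ^t C(s-τ) p(s-τ, y(s), y(τ)) ds] dτ has exactly one continuous solution y : [0,T] → ℝ^d with ‖y(t) - y₀‖ ≤ b for all t ∈ [0,T]. -/
/-!
In the delay variable `u = s - τ` the right-hand side becomes an operator `Φ` on continuous curves
in the ball `B̄(y₀, b)`, and `T ≤ b / (M₁ + M₂)` makes `Φ` preserve them. In the Bielecki norm
`sup_{t ≤ T} e^{-ρt} ‖y t - z t‖` the dependence on `y τ` is integrated against `e^{ρτ}` and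
contributes at most `(L₁ + L₂ M) / ρ`, whereas the memory term also sees `y s` for `s` up to the
present time `t`, which the weight cannot damp: it contributes `L₂ M T ≤ 1 / 2`. Hence `Φ` is a
contraction for large `ρ`; Picard iteration converges uniformly to a solution, and the contraction
estimate at a maximiser of `e^{-ρt} ‖y t - z t‖` gives uniqueness.
-/

open MeasureTheory Metric Set Filter Topology Real

section ClampedPicard

variable {X : Type*} {Φ : (ℝ → X) → ℝ → X} {T : ℝ} {x₀ : X}

noncomputable def clampedPicard (Φ : (ℝ → X) → ℝ → X) (hT : 0 ≤ T) (x₀ : X) (n : ℕ) : ℝ → X :=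
  (fun y s ↦ Φ y (projIcc 0 T hT s))^[n] fun _ ↦ x₀

theorem clampedPicard_succ (hT : 0 ≤ T) (n : ℕ) :
    clampedPicard Φ hT x₀ (n + 1) = fun s ↦ Φ (clampedPicard Φ hT x₀ n) (projIcc 0 T hT s) :=
  Function.iterate_succ_apply' _ _ _

theorem clampedPicard_succ_of_mem (hT : 0 ≤ T) (n : ℕ) {s : ℝ} (hs : s ∈ Icc 0 T) :
    clampedPicard Φ hT x₀ (n + 1) s = Φ (clampedPicard Φ hT x₀ n) s := by
  simp only [clampedPicard_succ, projIcc_of_mem hT hs]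

theorem clampedPicard_projIcc (hT : 0 ≤ T) (n : ℕ) (s : ℝ) :
    clampedPicard Φ hT x₀ n (projIcc 0 T hT s) = clampedPicard Φ hT x₀ n s := by
  cases n with
  | zero => rfl
  | succ n => simp only [clampedPicard_succ, projIcc_val]

end ClampedPicard

section Bielecki

variable {X : Type*} [MetricSpace X]

theorem exists_tendstoUniformly_of_dist_le_geometric [CompleteSpace X] {α : Type*}
    {f : ℕ → α → X} {C r : ℝ} (hr₀ : 0 ≤ r) (hr : r < 1)
    (hf : ∀ n x, dist (f n x) (f (n + 1) x) ≤ C * r ^ n) :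
    ∃ g : α → X, TendstoUniformly f g atTop ∧
      ∀ n x, dist (f n x) (g x) ≤ C * r ^ n / (1 - r) := by
  choose g hg using fun x ↦
    cauchySeq_tendsto_of_complete (cauchySeq_of_le_geometric r C hr (hf · x))
  have htail n x : dist (f n x) (g x) ≤ C * r ^ n / (1 - r) :=
    dist_le_of_le_geometric_of_tendsto r C hr (hf · x) (hg x) n
  have hlim : Tendsto (fun n : ℕ ↦ C * r ^ n / (1 - r)) atTop (𝓝 0) := by
    simpa using ((tendsto_pow_atTop_nhds_zero_of_lt_one hr₀ hr).const_mul C).div_const (1 - r)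
  refine ⟨g, Metric.tendstoUniformly_iff.2 fun ε hε ↦ ?_, htail⟩
  filter_upwards [hlim.eventually (gt_mem_nhds hε)] with n hn x
  exact (dist_comm (g x) _ ▸ htail n x).trans_lt hn

/-- `Φ` is a `θ`-contraction for the Bielecki distance `sup_{t ∈ [0, T]} e^{-ρt} d(y t, z t)`
between continuous `K`-valued curves, stated pointwise in `t`. -/
def BieleckiContracting (Φ : (ℝ → X) → ℝ → X) (K : Set X) (T ρ θ : ℝ) : Prop :=
  ∀ y z, Continuous y → (∀ s, y s ∈ K) → Continuous z → (∀ s, z s ∈ K) →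
    ∀ t ∈ Icc 0 T, ∀ β, (∀ σ ∈ Icc 0 t, dist (y σ) (z σ) ≤ β * exp (ρ * σ)) →
      dist (Φ y t) (Φ z t) ≤ θ * β * exp (ρ * t)

namespace BieleckiContracting

variable {Φ : (ℝ → X) → ℝ → X} {K : Set X} {T ρ θ : ℝ} {x₀ : X} {y z : ℝ → X}

theorem eqOn (hΦ : BieleckiContracting Φ K T ρ θ) (hθ : θ < 1) (hy : Continuous y)
    (hyK : ∀ s, y s ∈ K) (hz : Continuous z) (hzK : ∀ s, z s ∈ K)
    (hfy : ∀ t ∈ Icc 0 T, Φ y t = y t) (hfz : ∀ t ∈ Icc 0 T, Φ z t = z t) :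
    EqOn y z (Icc 0 T) := by
  rcases (Icc (0 : ℝ) T).eq_empty_or_nonempty with hT | hT
  · simp [hT]
  set w : ℝ → ℝ := fun σ ↦ dist (y σ) (z σ) * exp (-(ρ * σ))
  obtain ⟨t, ht, hmax⟩ :=
    isCompact_Icc.exists_isMaxOn hT (Continuous.continuousOn (by fun_prop) : ContinuousOn w _)
  have hdist σ : dist (y σ) (z σ) = w σ * exp (ρ * σ) := by
    simp only [w, mul_assoc, ← exp_add, neg_add_cancel, exp_zero, mul_one]
  have hle : ∀ σ ∈ Icc 0 T, dist (y σ) (z σ) ≤ w t * exp (ρ * σ) := fun σ hσ ↦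
    hdist σ ▸ mul_le_mul_of_nonneg_right (hmax hσ) (exp_pos _).le
  have hwt : w t ≤ θ * w t := by
    have := hΦ y z hy hyK hz hzK t ht (w t) fun σ hσ ↦ hle σ ⟨hσ.1, hσ.2.trans ht.2⟩
    rw [hfy t ht, hfz t ht, hdist] at this
    exact le_of_mul_le_mul_right this (exp_pos _)
  have hw₀ : 0 ≤ w t := mul_nonneg dist_nonneg (exp_pos _).le
  have hwt₀ : w t ≤ 0 := by nlinarith
  exact fun σ hσ ↦ dist_le_zero.1 ((hle σ hσ).trans
    (mul_nonpos_of_nonpos_of_nonneg hwt₀ (exp_pos _).le))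

theorem clampedPicard_mem (hT : 0 ≤ T) (hx₀ : x₀ ∈ K)
    (hmaps : ∀ y, Continuous y → (∀ s, y s ∈ K) →
      ContinuousOn (Φ y) (Icc 0 T) ∧ ∀ t ∈ Icc 0 T, Φ y t ∈ K) (n : ℕ) :
    Continuous (clampedPicard Φ hT x₀ n) ∧ ∀ s, clampedPicard Φ hT x₀ n s ∈ K := by
  induction n with
  | zero => exact ⟨continuous_const, fun _ ↦ hx₀⟩
  | succ n ih =>
    obtain ⟨hcont, hmem⟩ := hmaps _ ih.1 ih.2
    rw [clampedPicard_succ]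
    exact ⟨hcont.comp_continuous (continuous_subtype_val.comp continuous_projIcc)
      fun s ↦ (projIcc 0 T hT s).2, fun s ↦ hmem _ (projIcc 0 T hT s).2⟩

theorem dist_clampedPicard_succ_le (hΦ : BieleckiContracting Φ K T ρ θ) (hT : 0 ≤ T)
    (hKb : Bornology.IsBounded K) (hx₀ : x₀ ∈ K) (hρ : 0 ≤ ρ)
    (hmaps : ∀ y, Continuous y → (∀ s, y s ∈ K) →
      ContinuousOn (Φ y) (Icc 0 T) ∧ ∀ t ∈ Icc 0 T, Φ y t ∈ K) (n : ℕ) :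
    ∀ σ ∈ Icc 0 T, dist (clampedPicard Φ hT x₀ (n + 1) σ) (clampedPicard Φ hT x₀ n σ)
      ≤ diam K * θ ^ n * exp (ρ * σ) := by
  have hmem := clampedPicard_mem hT hx₀ hmaps
  induction n with
  | zero =>
    intro σ hσ
    calc _ ≤ diam K := dist_le_diam_of_mem hKb ((hmem 1).2 σ) ((hmem 0).2 σ)
      _ ≤ diam K * θ ^ 0 * exp (ρ * σ) := by
        simpa using le_mul_of_one_le_right diam_nonneg (one_le_exp (mul_nonneg hρ hσ.1))
  | succ n ih =>
    intro σ hσ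
    rw [clampedPicard_succ_of_mem hT _ hσ, clampedPicard_succ_of_mem hT _ hσ, pow_succ,
      mul_comm (θ ^ n) θ, ← mul_assoc, mul_comm _ θ, mul_assoc θ]
    exact hΦ _ _ (hmem _).1 (hmem _).2 (hmem _).1 (hmem _).2 σ hσ _
      fun τ hτ ↦ ih τ ⟨hτ.1, hτ.2.trans hσ.2⟩

theorem exists_fixedPoint [CompleteSpace X] (hΦ : BieleckiContracting Φ K T ρ θ)
    (hK : IsClosed K) (hKb : Bornology.IsBounded K) (hx₀ : x₀ ∈ K) (hT : 0 ≤ T) (hρ : 0 ≤ ρ)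
    (hθ₀ : 0 ≤ θ) (hθ : θ < 1)
    (hmaps : ∀ y, Continuous y → (∀ s, y s ∈ K) →
      ContinuousOn (Φ y) (Icc 0 T) ∧ ∀ t ∈ Icc 0 T, Φ y t ∈ K) :
    ∃ y, Continuous y ∧ (∀ s, y s ∈ K) ∧ ∀ t ∈ Icc 0 T, Φ y t = y t := by
  have hmem := clampedPicard_mem hT hx₀ hmaps
  have hstep n s : dist (clampedPicard Φ hT x₀ n s) (clampedPicard Φ hT x₀ (n + 1) s)
      ≤ diam K * exp (ρ * T) * θ ^ n := by
    have hs := (projIcc 0 T hT s).2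
    rw [← clampedPicard_projIcc hT n s, ← clampedPicard_projIcc hT (n + 1) s, dist_comm,
      mul_right_comm]
    refine (hΦ.dist_clampedPicard_succ_le hT hKb hx₀ hρ hmaps n _ hs).trans ?_
    gcongr
    exact hs.2
  obtain ⟨y, hunif, htail⟩ := exists_tendstoUniformly_of_dist_le_geometric hθ₀ hθ hstep
  have hy : Continuous y := hunif.continuous (.of_forall fun n ↦ (hmem n).1)
  have hyK s : y s ∈ K :=
    hK.mem_of_tendsto (hunif.tendsto_at s) (.of_forall fun n ↦ (hmem n).2 s)
  refine ⟨y, hy, hyK, fun t ht ↦ tendsto_nhds_unique ?_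
    ((hunif.tendsto_at t).comp (tendsto_add_atTop_nat 1))⟩
  have hβ : Tendsto (fun n : ℕ ↦ θ * (diam K * exp (ρ * T) * θ ^ n / (1 - θ)) * exp (ρ * t))
      atTop (𝓝 0) := by
    simpa using ((((tendsto_pow_atTop_nhds_zero_of_lt_one hθ₀ hθ).const_mul _).div_const _
      ).const_mul θ).mul_const _
  refine tendsto_iff_dist_tendsto_zero.2 (squeeze_zero (fun _ ↦ dist_nonneg) (fun n ↦ ?_) hβ)
  rw [Function.comp_apply, clampedPicard_succ_of_mem hT n ht]
  refine hΦ _ _ (hmem n).1 (hmem n).2 hy hyK t ht _ fun σ hσ ↦ (htail n σ).trans ?_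
  exact le_mul_of_one_le_right (div_nonneg (by positivity) (sub_nonneg.2 hθ.le))
    (one_le_exp (mul_nonneg hρ hσ.1))

end BieleckiContracting

end Bielecki

theorem integral_exp_mul_le {ρ : ℝ} (hρ : 0 < ρ) (t : ℝ) :
    ∫ τ in 0..t, exp (ρ * τ) ≤ exp (ρ * t) / ρ := by
  rw [intervalIntegral.integral_comp_mul_left (fun x ↦ exp x) hρ.ne', integral_exp, mul_zero,
    exp_zero, smul_eq_mul, inv_mul_eq_div]
  gcongr
  linarith

section MemoryIntegrand

variable {E : Type*} {P : ℝ → E → E → E} {y : ℝ → E}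

theorem continuousOn_memoryIntegrand [TopologicalSpace E]
    (hP : ContinuousOn (fun x : ℝ × E × E ↦ P x.1 x.2.1 x.2.2) (Ioi 0 ×ˢ univ))
    (hy : Continuous y) :
    ContinuousOn (fun x : ℝ × ℝ ↦ P x.2 (y (x.2 + x.1)) (y x.1)) (univ ×ˢ Ioi 0) :=
  hP.comp (by fun_prop : Continuous fun x : ℝ × ℝ ↦ (x.2, y (x.2 + x.1), y x.1)).continuousOn
    fun x hx ↦ ⟨hx.2, trivial⟩

theorem continuousAt_indicator_Ioc_sub [TopologicalSpace E] [Zero E] {F : ℝ × ℝ → E}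
    {x₀ : ℝ × ℝ} {u : ℝ} (hF : ContinuousAt F x₀) (hu : 0 < u) (hne : u ≠ x₀.2 - x₀.1) :
    ContinuousAt (fun x : ℝ × ℝ ↦ (Ioc 0 (x.2 - x.1)).indicator (fun _ ↦ F x) u) x₀ := by
  have hsub : ContinuousAt (fun x : ℝ × ℝ ↦ x.2 - x.1) x₀ := by fun_prop
  rcases hne.lt_or_gt with hlt | hgt
  · refine hF.congr ?_
    filter_upwards [hsub.eventually (lt_mem_nhds hlt)] with x hx
    rw [indicator_of_mem (show u ∈ Ioc 0 (x.2 - x.1) from ⟨hu, hx.le⟩)]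
  · refine (continuousAt_const (y := (0 : E))).congr ?_
    filter_upwards [hsub.eventually (gt_mem_nhds hgt)] with x hx
    rw [indicator_of_notMem fun h ↦ (h.2.trans_lt hx).false]

theorem integrableOn_memoryIntegrand [NormedAddCommGroup E] {B : Set E} {g : ℝ → ℝ}
    (hP : ContinuousOn (fun x : ℝ × E × E ↦ P x.1 x.2.1 x.2.2) (Ioi 0 ×ˢ univ))
    (hg : IntegrableOn g (Ioi 0)) (hPg : ∀ u > 0, ∀ v ∈ B, ∀ w ∈ B, ‖P u v w‖ ≤ g u)
    (hy : Continuous y) (hyB : ∀ s, y s ∈ B) (τ : ℝ) :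
    IntegrableOn (fun u ↦ P u (y (u + τ)) (y τ)) (Ioi 0) := by
  refine hg.mono' ?_ ((ae_restrict_iff' measurableSet_Ioi).2
    (.of_forall fun u hu ↦ hPg u hu _ (hyB _) _ (hyB _)))
  exact ((continuousOn_memoryIntegrand hP hy).comp
    (continuous_const.prodMk continuous_id).continuousOn fun u hu ↦
      ⟨trivial, hu⟩).aestronglyMeasurable measurableSet_Ioi

end MemoryIntegrand

section DelayedVolterra

variable {E : Type*} [NormedAddCommGroup E] [NormedSpace ℝ E]

/-- `∫_τ^t P (s - τ) (y s) (y τ) ds` in the delay variable `u = s - τ`. Unlike the interval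
integral it vanishes for `t < τ`, which makes it jointly continuous in `(τ, t)`. -/
noncomputable def memoryIntegral (P : ℝ → E → E → E) (y : ℝ → E) (τ t : ℝ) : E :=
  ∫ u in Ioc 0 (t - τ), P u (y (u + τ)) (y τ)

noncomputable def volterraMap (q : E → E) (P : ℝ → E → E → E) (y₀ : E) (y : ℝ → E) (t : ℝ) :
    E :=
  y₀ + ∫ τ in 0..t, (q (y τ) + memoryIntegral P y τ t)

variable {q : E → E} {P : ℝ → E → E → E} {y₀ : E} {y z : ℝ → E}

theorem intervalIntegral_eq_memoryIntegral {τ t : ℝ} (h : τ ≤ t) :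
    ∫ s in τ..t, P (s - τ) (y s) (y τ) = memoryIntegral P y τ t := by
  have := intervalIntegral.integral_comp_sub_right (fun u ↦ P u (y (u + τ)) (y τ)) τ
    (a := τ) (b := t)
  simp only [sub_add_cancel, sub_self] at this
  rw [this, intervalIntegral.integral_of_le (sub_nonneg.2 h), memoryIntegral]

theorem volterraMap_eq {t : ℝ} (ht : 0 ≤ t) :
    y₀ + ∫ τ in 0..t, (q (y τ) + ∫ s in τ..t, P (s - τ) (y s) (y τ)) =
      volterraMap q P y₀ y t := by
  refine congrArg (y₀ + ·) (intervalIntegral.integral_congr fun τ hτ ↦ ?_)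
  rw [uIcc_of_le ht] at hτ
  simp only [intervalIntegral_eq_memoryIntegral hτ.2]

theorem volterraMap_congr {t : ℝ} (ht : 0 ≤ t) (h : EqOn y z (Icc 0 t)) :
    volterraMap q P y₀ y t = volterraMap q P y₀ z t := by
  refine congrArg (y₀ + ·) (intervalIntegral.integral_congr fun τ hτ ↦ ?_)
  rw [uIcc_of_le ht] at hτ
  have hmem : memoryIntegral P y τ t = memoryIntegral P z τ t :=
    setIntegral_congr_fun measurableSet_Ioc fun u hu ↦ by
      rw [h hτ, h (show u + τ ∈ Icc 0 t from ⟨by linarith [hu.1, hτ.1], by linarith [hu.2]⟩)]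
  rw [h hτ, hmem]

theorem volterraMap_mem_closedBall {b M₁ M₂ T t : ℝ}
    (hqM : ∀ v ∈ closedBall y₀ b, ‖q v‖ ≤ M₁) (hyB : ∀ s, y s ∈ closedBall y₀ b)
    (ht : t ∈ Icc 0 T) (hM₂ : ∀ τ ∈ Icc 0 t, ‖memoryIntegral P y τ t‖ ≤ M₂)
    (hTb : (M₁ + M₂) * T ≤ b) :
    volterraMap q P y₀ y t ∈ closedBall y₀ b := by
  have hM : 0 ≤ M₁ + M₂ := add_nonneg ((norm_nonneg _).trans (hqM _ (hyB 0)))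
    ((norm_nonneg _).trans (hM₂ 0 ⟨le_rfl, ht.1⟩))
  rw [mem_closedBall, dist_eq_norm, volterraMap, add_sub_cancel_left]
  refine (intervalIntegral.norm_integral_le_of_norm_le_const (C := M₁ + M₂)
    fun τ hτ ↦ ?_).trans ?_
  · rw [uIoc_of_le ht.1] at hτ
    exact (norm_add_le _ _).trans (add_le_add (hqM _ (hyB τ)) (hM₂ τ ⟨hτ.1.le, hτ.2⟩))
  · rw [sub_zero, abs_of_nonneg ht.1]
    exact (mul_le_mul_of_nonneg_left ht.2 hM).trans hTb

variable {B : Set E} {g : ℝ → ℝ}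
  (hP : ContinuousOn (fun x : ℝ × E × E ↦ P x.1 x.2.1 x.2.2) (Ioi 0 ×ˢ univ))
  (hg : IntegrableOn g (Ioi 0)) (hPg : ∀ u > 0, ∀ v ∈ B, ∀ w ∈ B, ‖P u v w‖ ≤ g u)
include hP hg hPg

theorem continuous_memoryIntegral (hy : Continuous y) (hyB : ∀ s, y s ∈ B) :
    Continuous fun x : ℝ × ℝ ↦ memoryIntegral P y x.1 x.2 := by
  have hrepr : (fun x : ℝ × ℝ ↦ memoryIntegral P y x.1 x.2) = fun x ↦
      ∫ u in Ioi 0, (Ioc 0 (x.2 - x.1)).indicator (fun u ↦ P u (y (u + x.1)) (y x.1)) u := by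
    ext x
    rw [integral_indicator measurableSet_Ioc, Measure.restrict_restrict measurableSet_Ioc,
      inter_eq_self_of_subset_left Ioc_subset_Ioi_self, memoryIntegral]
  rw [hrepr, continuous_iff_continuousAt]
  intro x₀
  refine continuousAt_of_dominated (bound := g) (.of_forall fun x ↦ ?_) (.of_forall fun x ↦ ?_)
    hg ?_
  · exact (integrableOn_memoryIntegrand hP hg hPg hy hyB x.1).aestronglyMeasurable.indicator
      measurableSet_Ioc
  · refine (ae_restrict_iff' measurableSet_Ioi).2 (.of_forall fun u hu ↦ ?_)
    exact (norm_indicator_le_norm_self _ _).trans (hPg u hu _ (hyB _) _ (hyB _))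
  · filter_upwards [ae_restrict_mem measurableSet_Ioi, Measure.ae_ne _ (x₀.2 - x₀.1)]
      with u hu hne
    have hF : ContinuousAt (fun x : ℝ × ℝ ↦ P u (y (u + x.1)) (y x.1)) x₀ :=
      ((continuousOn_memoryIntegrand hP hy).continuousAt
        (prod_mem_nhds univ_mem (Ioi_mem_nhds hu))).comp (f := fun x : ℝ × ℝ ↦ (x.1, u))
        (by fun_prop)
    exact continuousAt_indicator_Ioc_sub hF hu hne

theorem continuous_volterraIntegrand (hq : Continuous q) (hy : Continuous y)
    (hyB : ∀ s, y s ∈ B) :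
    Continuous fun x : ℝ × ℝ ↦ q (y x.1) + memoryIntegral P y x.1 x.2 :=
  (hq.comp (hy.comp continuous_fst)).add (continuous_memoryIntegral hP hg hPg hy hyB)

theorem continuous_volterraMap (hq : Continuous q) (hy : Continuous y) (hyB : ∀ s, y s ∈ B) :
    Continuous (volterraMap q P y₀ y) :=
  continuous_const.add <| intervalIntegral.continuous_parametric_intervalIntegral_of_continuous
    (f := fun t τ ↦ q (y τ) + memoryIntegral P y τ t)
    ((continuous_volterraIntegrand hP hg hPg hq hy hyB).comp continuous_swap) continuous_id

variable {k : ℝ → ℝ} {Λ : ℝ} (hk : IntegrableOn k (Ioi 0)) (hk₀ : ∀ u > 0, 0 ≤ k u)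
  (hkΛ : ∫ u in Ioi 0, k u ≤ Λ)
  (hPk : ∀ u > 0, ∀ v₁ ∈ B, ∀ v₂ ∈ B, ∀ w₁ ∈ B, ∀ w₂ ∈ B,
    ‖P u v₁ w₁ - P u v₂ w₂‖ ≤ k u * (‖v₁ - v₂‖ + ‖w₁ - w₂‖))
include hk hk₀ hkΛ hPk

theorem norm_memoryIntegral_sub_le (hy : Continuous y) (hyB : ∀ s, y s ∈ B)
    (hz : Continuous z) (hzB : ∀ s, z s ∈ B) {τ t δ : ℝ} (hτt : τ ≤ t)
    (hd : ∀ σ ∈ Icc τ t, ‖y σ - z σ‖ ≤ δ) :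
    ‖memoryIntegral P y τ t - memoryIntegral P z τ t‖ ≤ Λ * (δ + ‖y τ - z τ‖) := by
  have hc : 0 ≤ δ + ‖y τ - z τ‖ :=
    add_nonneg ((norm_nonneg _).trans (hd τ ⟨le_rfl, hτt⟩)) (norm_nonneg _)
  have hbound : ∀ u ∈ Ioc 0 (t - τ),
      ‖P u (y (u + τ)) (y τ) - P u (z (u + τ)) (z τ)‖ ≤ k u * (δ + ‖y τ - z τ‖) := by
    intro u hu
    refine (hPk u hu.1 _ (hyB _) _ (hzB _) _ (hyB _) _ (hzB _)).trans ?_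
    gcongr
    · exact hk₀ u hu.1
    · exact hd _ ⟨by linarith [hu.1], by linarith [hu.2]⟩
  rw [memoryIntegral, memoryIntegral, ← integral_sub
    ((integrableOn_memoryIntegrand hP hg hPg hy hyB τ).mono_set Ioc_subset_Ioi_self)
    ((integrableOn_memoryIntegrand hP hg hPg hz hzB τ).mono_set Ioc_subset_Ioi_self)]
  calc _ ≤ ∫ u in Ioc 0 (t - τ), k u * (δ + ‖y τ - z τ‖) :=
        norm_integral_le_of_norm_le ((hk.mono_set Ioc_subset_Ioi_self).mul_const _)
          ((ae_restrict_iff' measurableSet_Ioc).2 (.of_forall hbound))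
    _ = (∫ u in Ioc 0 (t - τ), k u) * (δ + ‖y τ - z τ‖) := integral_mul_const _ _
    _ ≤ Λ * (δ + ‖y τ - z τ‖) := by
        refine mul_le_mul_of_nonneg_right (le_trans ?_ hkΛ) hc
        exact setIntegral_mono_set hk ((ae_restrict_iff' measurableSet_Ioi).2
          (.of_forall hk₀)) Ioc_subset_Ioi_self.eventuallyLE

theorem norm_volterraIntegrand_sub_le {L : ℝ}
    (hqL : ∀ v₁ ∈ B, ∀ v₂ ∈ B, ‖q v₁ - q v₂‖ ≤ L * ‖v₁ - v₂‖) (hy : Continuous y)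
    (hyB : ∀ s, y s ∈ B) (hz : Continuous z) (hzB : ∀ s, z s ∈ B) {τ t δ : ℝ} (hτt : τ ≤ t)
    (hd : ∀ σ ∈ Icc τ t, ‖y σ - z σ‖ ≤ δ) :
    ‖q (y τ) + memoryIntegral P y τ t - (q (z τ) + memoryIntegral P z τ t)‖ ≤
      (L + Λ) * ‖y τ - z τ‖ + Λ * δ := by
  calc _ ≤ ‖q (y τ) - q (z τ)‖ + ‖memoryIntegral P y τ t - memoryIntegral P z τ t‖ := by
        rw [add_sub_add_comm]; exact norm_add_le _ _
    _ ≤ L * ‖y τ - z τ‖ + Λ * (δ + ‖y τ - z τ‖) := add_le_add (hqL _ (hyB τ) _ (hzB τ))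
        (norm_memoryIntegral_sub_le hP hg hPg hk hk₀ hkΛ hPk hy hyB hz hzB hτt hd)
    _ = _ := by ring

theorem bieleckiContracting_volterraMap {L T ρ : ℝ} (hq : Continuous q)
    (hqL : ∀ v₁ ∈ B, ∀ v₂ ∈ B, ‖q v₁ - q v₂‖ ≤ L * ‖v₁ - v₂‖) (hL : 0 ≤ L) (hρ : 0 < ρ) :
    BieleckiContracting (volterraMap q P y₀) B T ρ ((L + Λ) / ρ + Λ * T) := by
  intro y z hy hyB hz hzB t ht β hd
  have hΛ : 0 ≤ Λ := (setIntegral_nonneg measurableSet_Ioi hk₀).trans hkΛ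
  have hβ : 0 ≤ β := by simpa using dist_nonneg.trans (hd 0 ⟨le_rfl, ht.1⟩)
  simp only [dist_eq_norm] at hd ⊢
  have hpt : ∀ τ ∈ Ioc 0 t,
      ‖q (y τ) + memoryIntegral P y τ t - (q (z τ) + memoryIntegral P z τ t)‖ ≤
        (L + Λ) * β * exp (ρ * τ) + Λ * β * exp (ρ * t) := fun τ hτ ↦ by
    refine (norm_volterraIntegrand_sub_le hP hg hPg hk hk₀ hkΛ hPk hqL hy hyB hz hzB hτ.2
      (δ := β * exp (ρ * t)) fun σ hσ ↦ (hd σ ⟨hτ.1.le.trans hσ.1, hσ.2⟩).trans ?_).trans ?_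
    · gcongr; exact hσ.2
    · rw [mul_assoc (L + Λ), ← mul_assoc Λ]; gcongr; exact hd τ ⟨hτ.1.le, hτ.2⟩
  have hint : ∀ y, Continuous y → (∀ s, y s ∈ B) →
      IntervalIntegrable (fun τ ↦ q (y τ) + memoryIntegral P y τ t) volume 0 t :=
    fun y hy hyB ↦ ((continuous_volterraIntegrand hP hg hPg hq hy hyB).comp
      (continuous_id.prodMk continuous_const)).intervalIntegrable _ _
  rw [volterraMap, volterraMap, add_sub_add_left_eq_sub,
    ← intervalIntegral.integral_sub (hint y hy hyB) (hint z hz hzB)]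
  calc _ ≤ ∫ τ in 0..t, ((L + Λ) * β * exp (ρ * τ) + Λ * β * exp (ρ * t)) :=
        intervalIntegral.norm_integral_le_of_norm_le ht.1 (.of_forall hpt)
          (Continuous.intervalIntegrable (by fun_prop) _ _)
    _ = (L + Λ) * β * (∫ τ in 0..t, exp (ρ * τ)) + Λ * β * exp (ρ * t) * t := by
        rw [intervalIntegral.integral_add (Continuous.intervalIntegrable (by fun_prop) _ _)
          intervalIntegrable_const, intervalIntegral.integral_const_mul,
          intervalIntegral.integral_const, smul_eq_mul, sub_zero, mul_comm t]
    _ ≤ (L + Λ) * β * (exp (ρ * t) / ρ) + Λ * β * exp (ρ * t) * T := by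
        gcongr
        · exact integral_exp_mul_le hρ t
        · exact ht.2
    _ = _ := by ring

end DelayedVolterra

theorem exists_unique_fixedPoint_volterraMap {E : Type*} [NormedAddCommGroup E]
    [NormedSpace ℝ E] [CompleteSpace E] {q : E → E} {P : ℝ → E → E → E} {y₀ : E}
    {g k : ℝ → ℝ} {b T L Λ M₁ M₂ : ℝ}
    (hq : Continuous q) (hqL : ∀ v₁ ∈ closedBall y₀ b, ∀ v₂ ∈ closedBall y₀ b,
      ‖q v₁ - q v₂‖ ≤ L * ‖v₁ - v₂‖) (hqM : ∀ v ∈ closedBall y₀ b, ‖q v‖ ≤ M₁)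
    (hP : ContinuousOn (fun x : ℝ × E × E ↦ P x.1 x.2.1 x.2.2) (Ioi 0 ×ˢ univ))
    (hg : IntegrableOn g (Ioi 0))
    (hPg : ∀ u > 0, ∀ v ∈ closedBall y₀ b, ∀ w ∈ closedBall y₀ b, ‖P u v w‖ ≤ g u)
    (hk : IntegrableOn k (Ioi 0)) (hk₀ : ∀ u > 0, 0 ≤ k u) (hkΛ : ∫ u in Ioi 0, k u ≤ Λ)
    (hPk : ∀ u > 0, ∀ v₁ ∈ closedBall y₀ b, ∀ v₂ ∈ closedBall y₀ b,
      ∀ w₁ ∈ closedBall y₀ b, ∀ w₂ ∈ closedBall y₀ b,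
      ‖P u v₁ w₁ - P u v₂ w₂‖ ≤ k u * (‖v₁ - v₂‖ + ‖w₁ - w₂‖))
    (hM₂ : ∀ y, Continuous y → (∀ s, y s ∈ closedBall y₀ b) → ∀ t ∈ Icc 0 T, ∀ τ ∈ Icc 0 t,
      ‖∫ s in τ..t, P (s - τ) (y s) (y τ)‖ ≤ M₂)
    (hL : 0 ≤ L) (hb : 0 ≤ b) (hT : 0 ≤ T) (hTb : (M₁ + M₂) * T ≤ b) (hΛT : Λ * T < 1) :
    ∃ y, (ContinuousOn y (Icc 0 T) ∧ (∀ t ∈ Icc 0 T, y t ∈ closedBall y₀ b) ∧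
        ∀ t ∈ Icc 0 T, y t = volterraMap q P y₀ y t) ∧
      ∀ z, ContinuousOn z (Icc 0 T) → (∀ t ∈ Icc 0 T, z t ∈ closedBall y₀ b) →
        (∀ t ∈ Icc 0 T, z t = volterraMap q P y₀ z t) → EqOn z y (Icc 0 T) := by
  have hΛ : 0 ≤ Λ := (setIntegral_nonneg measurableSet_Ioi hk₀).trans hkΛ
  obtain ⟨ρ, hρθ, hρ⟩ : ∃ ρ, (L + Λ) / ρ < 1 - Λ * T ∧ 0 < ρ :=
    (((tendsto_const_nhds.div_atTop tendsto_id).eventually (gt_mem_nhds (sub_pos.2 hΛT))).and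
      (eventually_gt_atTop 0)).exists
  have hΦ := bieleckiContracting_volterraMap (y₀ := y₀) (T := T) hP hg hPg hk hk₀ hkΛ hPk hq
    hqL hL hρ
  obtain ⟨y, hy, hyB, hfix⟩ := hΦ.exists_fixedPoint isClosed_closedBall isBounded_closedBall
    (mem_closedBall_self hb) hT hρ.le (by positivity) (by linarith) fun y hy hyB ↦
      ⟨(continuous_volterraMap hP hg hPg hq hy hyB).continuousOn, fun t ht ↦
        volterraMap_mem_closedBall hqM hyB ht (fun τ hτ ↦
          intervalIntegral_eq_memoryIntegral (P := P) hτ.2 ▸ hM₂ y hy hyB t ht τ hτ) hTb⟩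
  refine ⟨y, ⟨hy.continuousOn, fun t _ ↦ hyB t, fun t ht ↦ (hfix t ht).symm⟩,
    fun z hz hzB hzfix ↦ ?_⟩
  set z' := fun s ↦ z (projIcc 0 T hT s)
  have hz'z : EqOn z' z (Icc 0 T) := fun s hs ↦ by simp only [z', projIcc_of_mem hT hs]
  have hz'fix : ∀ t ∈ Icc 0 T, volterraMap q P y₀ z' t = z' t := fun t ht ↦ by
    rw [volterraMap_congr ht.1 (hz'z.mono (Icc_subset_Icc_right ht.2)), hz'z ht, hzfix t ht]
  refine fun t ht ↦ (hz'z ht).symm.trans (hΦ.eqOn (by linarith) ?_ ?_ hy hyB hz'fix hfix ht)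
  · exact hz.comp_continuous (continuous_subtype_val.comp continuous_projIcc)
      fun s ↦ (projIcc 0 T hT s).2
  · exact fun s ↦ hzB _ (projIcc 0 T hT s).2

section Kernel

variable {γ ξ η D : ℝ} {C : ℝ → ℝ}

theorem kernel_nonneg (hγ : 0 < γ) (hξ : 0 < ξ) (hD : 0 < D)
    (hC : ∀ z > 0, C z = γ * ξ * exp (-η * z) / (4 * π * D * z)) : ∀ z > 0, 0 ≤ C z :=
  fun z hz ↦ by rw [hC z hz]; positivity

theorem continuousOn_kernel (hD : 0 < D)
    (hC : ∀ z > 0, C z = γ * ξ * exp (-η * z) / (4 * π * D * z)) : ContinuousOn C (Ioi 0) := by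
  refine ContinuousOn.congr ?_ fun z hz ↦ hC z hz
  exact (Continuous.continuousOn (by fun_prop)).div (Continuous.continuousOn (by fun_prop))
    fun z (hz : 0 < z) ↦ by positivity

theorem integrableOn_kernel_mul_sqrt (hη : 0 < η) (hD : 0 < D)
    (hC : ∀ z > 0, C z = γ * ξ * exp (-η * z) / (4 * π * D * z)) :
    IntegrableOn (fun z ↦ C z * √(4 * D * z)) (Ioi 0) := by
  refine IntegrableOn.congr_fun ((integrableOn_rpow_mul_exp_neg_mul_rpow (s := -(1 / 2))
    (by norm_num) one_pos hη).const_mul (γ * ξ * √(4 * D) / (4 * π * D)))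
    (fun z (hz : 0 < z) ↦ ?_) measurableSet_Ioi
  rw [hC z hz, rpow_one, rpow_neg hz.le, ← sqrt_eq_rpow,
    sqrt_mul (by positivity : (0 : ℝ) ≤ 4 * D) z]
  field_simp
  rw [sq_sqrt hz.le]

end Kernel

theorem norm_smul_le_mul_of_le {E : Type*} [NormedAddCommGroup E] [NormedSpace ℝ E] {c r : ℝ}
    {x : E} (hc : 0 ≤ c) (h : ‖x‖ ≤ r) : ‖c • x‖ ≤ c * r :=
  (norm_smul_of_nonneg hc x).trans_le (mul_le_mul_of_nonneg_left h hc)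

theorem bounds_of_eq_min_div {a b S K T : ℝ} (ha : 0 ≤ a) (hb : 0 ≤ b) (hS : 0 ≤ S) (hK : 0 ≤ K)
    (hT : T = min a (min (b / S) (1 / K))) : 0 ≤ T ∧ T ≤ a ∧ S * T ≤ b ∧ K * T ≤ 1 := by
  subst hT
  refine ⟨by positivity, min_le_left _ _, ?_, ?_⟩
  · rw [mul_comm]
    exact mul_le_of_le_div₀ hb hS ((min_le_right _ _).trans (min_le_left _ _))
  · rw [mul_comm]
    exact mul_le_of_le_div₀ zero_le_one hK ((min_le_right _ _).trans (min_le_right _ _))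

theorem local_existence_uniqueness_general
    (N : ℕ)
    (γ ξ η D : ℝ) (hγ : 0 < γ) (hξ : 0 < ξ) (hη : 0 < η) (hD : 0 < D)
    (C : ℝ → ℝ) (hC : ∀ z > 0, C z = γ * ξ * Real.exp (-η * z) / (4 * Real.pi * D * z))
    (y₀ : EuclideanSpace ℝ (Fin (4 * N))) (a b : ℝ) (ha : 0 < a) (hb : 0 < b)
    (q : EuclideanSpace ℝ (Fin (4 * N)) → EuclideanSpace ℝ (Fin (4 * N)))
    (hq : Continuous q)
    (p : ℝ → EuclideanSpace ℝ (Fin (4 * N)) → EuclideanSpace ℝ (Fin (4 * N)) →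
      EuclideanSpace ℝ (Fin (4 * N)))
    (hp : ContinuousOn
      (fun x : ℝ × EuclideanSpace ℝ (Fin (4 * N)) × EuclideanSpace ℝ (Fin (4 * N)) =>
        p x.1 x.2.1 x.2.2) (Set.Ioi (0 : ℝ) ×ˢ Set.univ))
    (L₁ L₂ Mbar M₁ M₂ M T : ℝ) (hL₁ : 0 < L₁) (hL₂ : 0 < L₂)
    (hqLip : ∀ y₁ ∈ closedBall y₀ b, ∀ y₂ ∈ closedBall y₀ b,
      ‖q y₁ - q y₂‖ ≤ L₁ * ‖y₁ - y₂‖)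
    (hpBound : ∀ h > (0 : ℝ), ∀ u ∈ closedBall y₀ b, ∀ v ∈ closedBall y₀ b,
      ‖p h u v‖ ≤ Mbar * Real.sqrt (2 * N) * Real.sqrt (4 * D * h))
    (hpLip : ∀ h > (0 : ℝ), ∀ u₁ ∈ closedBall y₀ b, ∀ u₂ ∈ closedBall y₀ b,
      ∀ v₁ ∈ closedBall y₀ b, ∀ v₂ ∈ closedBall y₀ b,
      ‖p h u₁ v₁ - p h u₂ v₂‖ ≤ Real.sqrt (4 * D * h) * (L₂ * (‖u₁ - u₂‖ + ‖v₁ - v₂‖)))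
    (hM₁ : IsLUB {r : ℝ | ∃ y ∈ closedBall y₀ b, r = ‖q y‖} M₁)
    (hM₂ : IsLUB {r : ℝ | ∃ t ∈ Set.Icc 0 a, ∃ τ ∈ Set.Icc 0 t,
      ∃ y : ℝ → EuclideanSpace ℝ (Fin (4 * N)),
        ContinuousOn y (Set.Icc 0 a) ∧ (∀ s ∈ Set.Icc 0 a, y s ∈ closedBall y₀ b) ∧
        r = ‖∫ s in τ..t, C (s - τ) • p (s - τ) (y s) (y τ)‖} M₂)
    (hM : M = ∫ z in Set.Ioi (0 : ℝ), C z * Real.sqrt (4 * D * z))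
    (hT : T = min a (min (b / (M₁ + M₂)) (1 / (L₁ + 2 * L₂ * M)))) :
    ∃ y : ℝ → EuclideanSpace ℝ (Fin (4 * N)),
      (ContinuousOn y (Set.Icc 0 T) ∧
        (∀ t ∈ Set.Icc 0 T, ‖y t - y₀‖ ≤ b) ∧
        (∀ t ∈ Set.Icc 0 T,
          y t = y₀ + ∫ τ in (0 : ℝ)..t,
            (q (y τ) + ∫ s in τ..t, C (s - τ) • p (s - τ) (y s) (y τ)))) ∧
      ∀ z : ℝ → EuclideanSpace ℝ (Fin (4 * N)),
        ContinuousOn z (Set.Icc 0 T) →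
        (∀ t ∈ Set.Icc 0 T, ‖z t - y₀‖ ≤ b) →
        (∀ t ∈ Set.Icc 0 T,
          z t = y₀ + ∫ τ in (0 : ℝ)..t,
            (q (z τ) + ∫ s in τ..t, C (s - τ) • p (s - τ) (z s) (z τ))) →
        ∀ t ∈ Set.Icc 0 T, z t = y t := by
  have hC₀ := kernel_nonneg hγ hξ hD hC
  have hk := integrableOn_kernel_mul_sqrt hη hD hC
  have hM₀ : 0 ≤ M := hM ▸ setIntegral_nonneg measurableSet_Ioi fun z hz ↦
    mul_nonneg (hC₀ z hz) (sqrt_nonneg _)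
  have hM₁₀ : 0 ≤ M₁ := (norm_nonneg _).trans (hM₁.1 ⟨y₀, mem_closedBall_self hb.le, rfl⟩)
  have hM₂₀ : 0 ≤ M₂ := hM₂.1 ⟨0, ⟨le_rfl, ha.le⟩, 0, ⟨le_rfl, le_rfl⟩, fun _ ↦ y₀,
    continuousOn_const, fun _ _ ↦ mem_closedBall_self hb.le, by simp⟩
  obtain ⟨hT₀, hTa, hTb, hTL⟩ :=
    bounds_of_eq_min_div ha.le hb.le (add_nonneg hM₁₀ hM₂₀) (by positivity) hT
  set P := fun h u v ↦ C h • p h u v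
  obtain ⟨y, ⟨hyc, hyB, hy⟩, huniq⟩ := exists_unique_fixedPoint_volterraMap (P := P)
    (k := fun z ↦ L₂ * (C z * √(4 * D * z))) (Λ := L₂ * M) hq hqLip (fun v hv ↦ hM₁.1 ⟨v, hv, rfl⟩)
    (((continuousOn_kernel hD hC).comp continuousOn_fst fun x hx ↦ hx.1).smul hp)
    (hk.const_mul (Mbar * √(2 * N)))
    (fun u hu v hv w hw ↦
      (norm_smul_le_mul_of_le (hC₀ u hu) (hpBound u hu v hv w hw)).trans_eq (by ring))
    (hk.const_mul L₂) (fun z hz ↦ mul_nonneg hL₂.le (mul_nonneg (hC₀ z hz) (sqrt_nonneg _)))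
    (by rw [integral_const_mul, hM])
    (fun u hu v₁ hv₁ v₂ hv₂ w₁ hw₁ w₂ hw₂ ↦ smul_sub (C u) (p u v₁ w₁) (p u v₂ w₂) ▸
      (norm_smul_le_mul_of_le (hC₀ u hu) (hpLip u hu v₁ hv₁ v₂ hv₂ w₁ hw₁ w₂ hw₂)).trans_eq
        (by ring))
    (fun y hy hyB t ht τ hτ ↦ hM₂.1 ⟨t, ⟨ht.1, ht.2.trans hTa⟩, τ, hτ, y, hy.continuousOn,
      fun s _ ↦ hyB s, rfl⟩)
    hL₁.le hb.le hT₀ hTb (by nlinarith [mul_nonneg hL₁.le hT₀])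
  refine ⟨y, ⟨hyc, fun t ht ↦ mem_closedBall_iff_norm.1 (hyB t ht),
    fun t ht ↦ (hy t ht).trans (volterraMap_eq (P := P) ht.1).symm⟩, fun z hzc hzB hz ↦
    huniq z hzc (fun t ht ↦ mem_closedBall_iff_norm.2 (hzB t ht))
      fun t ht ↦ (hz t ht).trans (volterraMap_eq (P := P) ht.1)⟩

/-- **Local existence and uniqueness (Theorem 3.1)** for the delayed Volterra integral
equation `y(t) = y₀ + ∫₀ᵗ [q(y(τ)) + ∫_τ^t C(s-τ) p(s-τ, y(s), y(τ)) ds] dτ`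
arising from the hybrid alignment–chemotaxis model. -/
theorem local_existence_uniqueness
    (N : ℕ) (hN : 1 ≤ N)
    (γ ξ η D : ℝ) (hγ : 0 < γ) (hξ : 0 < ξ) (hη : 0 < η) (hD : 0 < D)
    (C : ℝ → ℝ) (hC : ∀ z > 0, C z = γ * ξ * Real.exp (-η * z) / (4 * Real.pi * D * z))
    (y₀ : EuclideanSpace ℝ (Fin (4 * N))) (a b : ℝ) (ha : 0 < a) (hb : 0 < b)
    (q : EuclideanSpace ℝ (Fin (4 * N)) → EuclideanSpace ℝ (Fin (4 * N)))
    (hq : Continuous q)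
    (p : ℝ → EuclideanSpace ℝ (Fin (4 * N)) → EuclideanSpace ℝ (Fin (4 * N)) →
      EuclideanSpace ℝ (Fin (4 * N)))
    (hp : ContinuousOn
      (fun x : ℝ × EuclideanSpace ℝ (Fin (4 * N)) × EuclideanSpace ℝ (Fin (4 * N)) =>
        p x.1 x.2.1 x.2.2) (Set.Ioi (0 : ℝ) ×ˢ Set.univ))
    (L₁ L₂ Mbar M₁ M₂ M T : ℝ) (hL₁ : 0 < L₁) (hL₂ : 0 < L₂) (hMbar : 0 < Mbar)
    (hqLip : ∀ y₁ ∈ closedBall y₀ b, ∀ y₂ ∈ closedBall y₀ b,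
      ‖q y₁ - q y₂‖ ≤ L₁ * ‖y₁ - y₂‖)
    (hpBound : ∀ h > (0 : ℝ), ∀ u ∈ closedBall y₀ b, ∀ v ∈ closedBall y₀ b,
      ‖p h u v‖ ≤ Mbar * Real.sqrt (2 * N) * Real.sqrt (4 * D * h))
    (hpLip : ∀ h > (0 : ℝ), ∀ u₁ ∈ closedBall y₀ b, ∀ u₂ ∈ closedBall y₀ b,
      ∀ v₁ ∈ closedBall y₀ b, ∀ v₂ ∈ closedBall y₀ b,
      ‖p h u₁ v₁ - p h u₂ v₂‖ ≤ Real.sqrt (4 * D * h) * (L₂ * (‖u₁ - u₂‖ + ‖v₁ - v₂‖)))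
    (hM₁ : IsLUB {r : ℝ | ∃ y ∈ closedBall y₀ b, r = ‖q y‖} M₁)
    (hM₂ : IsLUB {r : ℝ | ∃ t ∈ Set.Icc 0 a, ∃ τ ∈ Set.Icc 0 t,
      ∃ y : ℝ → EuclideanSpace ℝ (Fin (4 * N)),
        ContinuousOn y (Set.Icc 0 a) ∧ (∀ s ∈ Set.Icc 0 a, y s ∈ closedBall y₀ b) ∧
        r = ‖∫ s in τ..t, C (s - τ) • p (s - τ) (y s) (y τ)‖} M₂)
    (hM : M = ∫ z in Set.Ioi (0 : ℝ), C z * Real.sqrt (4 * D * z))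
    (hT : T = min a (min (b / (M₁ + M₂)) (1 / (L₁ + 2 * L₂ * M)))) :
    ∃ y : ℝ → EuclideanSpace ℝ (Fin (4 * N)),
      (ContinuousOn y (Set.Icc 0 T) ∧
        (∀ t ∈ Set.Icc 0 T, ‖y t - y₀‖ ≤ b) ∧
        (∀ t ∈ Set.Icc 0 T,
          y t = y₀ + ∫ τ in (0 : ℝ)..t,
            (q (y τ) + ∫ s in τ..t, C (s - τ) • p (s - τ) (y s) (y τ)))) ∧
      ∀ z : ℝ → EuclideanSpace ℝ (Fin (4 * N)),
        ContinuousOn z (Set.Icc 0 T) →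
        (∀ t ∈ Set.Icc 0 T, ‖z t - y₀‖ ≤ b) →
        (∀ t ∈ Set.Icc 0 T,
          z t = y₀ + ∫ τ in (0 : ℝ)..t,
            (q (z τ) + ∫ s in τ..t, C (s - τ) • p (s - τ) (z s) (z τ))) →
        ∀ t ∈ Set.Icc 0 T, z t = y t :=
  local_existence_uniqueness_general N γ ξ η D hγ hξ hη hD C hC y₀ a b ha hb q hq p hp L₁ L₂ Mbar M₁
    M₂ M T hL₁ hL₂ hqLip hpBound hpLip hM₁ hM₂ hM hT
end

section
/- Let d = 4N for an integer N ≥ 1, and let γ, ξ, η, D > 0 with kernel C(z) = γξ e^{-ηz}/(4πDz) for z > 0. Suppose q : ℝ^d → ℝ^d is continuous and p : (0,∞) × ℝ^d × ℝ^d → ℝ^d is continuous with ‖p(h, u, v)‖ ≤ M̄√(2N)·√(4Dh) for some M̄ > 0, for all h > 0 and all u, v with ‖u - y₀‖ ≤ P and ‖v - y₀‖ ≤ P. Let y : [0,T) → ℝ^d be a continuous solution of y(t) = y₀ + ∫₀^t [q(y(τ)) + ∫_τ^t C(s-τ) p(s-τ, y(s), y(τ)) ds] dτ that satisfies ‖y(t)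 - y₀‖ ≤ P on [0,T) for some constant P > 0. Then the limit of y(t) as t → T⁻ exists; in particular {y(tₙ)} is a Cauchy sequence for every monotone increasing sequence tₙ → T. -/
/-!
The kernel `C(s-τ) p(s-τ, y s, y τ)` is weakly singular: the growth bound `√(4D(s-τ))` on `p`
cancels half of the singularity `1/(s-τ)` of `C`, leaving `K/√(s-τ)`. Splitting `y t₂ - y t₁`
into the memory term `∫₀^{t₁} ∫_{t₁}^{t₂}` and the recent term `∫_{t₁}^{t₂}` then gives
`‖y t₂ - y t₁‖ ≤ A (t₂ - t₁) + B √(t₂ - t₁)` on `[0,T)`. Hence `y` is uniformly continuous on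
`[0,T)`, so it maps the Cauchy filter `𝓝[<] T` to a Cauchy filter, which converges since
`ℝ^{4N}` is complete.
-/

open MeasureTheory Metric Set Filter Real Function
open scoped Topology Interval

theorem Real.sqrt_sub_sqrt_le_sqrt_sub {a b : ℝ} (ha : 0 ≤ a) (hab : a ≤ b) :
    √b - √a ≤ √(b - a) := by
  have hb : √b ≤ √a + √(b - a) := by
    rw [sqrt_le_left (by positivity), add_sq, sq_sqrt ha, sq_sqrt (sub_nonneg.2 hab)]
    nlinarith [mul_nonneg (sqrt_nonneg a) (sqrt_nonneg (b - a))]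
  linarith

theorem inv_sqrt_sub_eqOn_rpow {τ a b : ℝ} (ha : τ ≤ a) (hb : τ ≤ b) :
    EqOn (fun s => (√(s - τ))⁻¹) (fun s => (s - τ) ^ (-(1 / 2) : ℝ)) [[a, b]] := fun s hs => by
  have hs : 0 ≤ s - τ := sub_nonneg.2 (le_trans (le_min ha hb) hs.1)
  simp only [rpow_neg hs, sqrt_eq_rpow]

theorem intervalIntegrable_inv_sqrt_sub {τ a b : ℝ} (ha : τ ≤ a) (hb : τ ≤ b) :
    IntervalIntegrable (fun s => (√(s - τ))⁻¹) volume a b := by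
  rw [intervalIntegrable_congr ((inv_sqrt_sub_eqOn_rpow ha hb).mono uIoc_subset_uIcc)]
  simpa using (intervalIntegral.intervalIntegrable_rpow' (r := -(1 / 2)) (by norm_num)
    (a := a - τ) (b := b - τ)).comp_sub_right τ

theorem integral_inv_sqrt_sub {τ a b : ℝ} (ha : τ ≤ a) (hb : τ ≤ b) :
    ∫ s in a..b, (√(s - τ))⁻¹ = 2 * (√(b - τ) - √(a - τ)) := by
  rw [intervalIntegral.integral_congr (inv_sqrt_sub_eqOn_rpow ha hb),
    intervalIntegral.integral_comp_sub_right (fun u => u ^ (-(1 / 2) : ℝ)) τ,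
    integral_rpow (Or.inl (by norm_num)), sqrt_eq_rpow, sqrt_eq_rpow]
  norm_num
  ring

theorem continuousOn_heatKernel {a η D : ℝ} (hD : D ≠ 0) :
    ContinuousOn (fun z => a * exp (-η * z) / (4 * π * D * z)) (Ioi 0) :=
  ContinuousOn.div (by fun_prop) (by fun_prop) fun z (hz : 0 < z) => by
    have := pi_pos
    positivity

theorem uniformContinuousOn_of_dist_le_modulus {α : Type*} [PseudoMetricSpace α] {g : ℝ → α}
    {s : Set ℝ} {ω : ℝ → ℝ} (hω : Tendsto ω (𝓝 0) (𝓝 0))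
    (hg : ∀ x ∈ s, ∀ x' ∈ s, x ≤ x' → dist (g x) (g x') ≤ ω (x' - x)) :
    UniformContinuousOn g s := by
  rw [Metric.uniformContinuousOn_iff]
  intro ε hε
  obtain ⟨δ, hδ, hω'⟩ := Metric.eventually_nhds_iff.1 (hω.eventually (gt_mem_nhds hε))
  refine ⟨δ, hδ, fun x hx x' hx' hxx' => ?_⟩
  rcases le_total x x' with h | h
  · exact (hg x hx x' hx' h).trans_lt (hω' (by rwa [Real.dist_eq, sub_zero,
      abs_sub_comm, ← Real.dist_eq]))
  · rw [dist_comm] at hxx' ⊢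
    exact (hg x' hx' x hx h).trans_lt (hω' (by rwa [Real.dist_eq, sub_zero,
      abs_sub_comm, ← Real.dist_eq]))

theorem UniformContinuousOn.exists_tendsto_nhdsLT {α : Type*} [UniformSpace α] [CompleteSpace α]
    {g : ℝ → α} {a b : ℝ} (hab : a < b) (hg : UniformContinuousOn g (Ico a b)) :
    ∃ L, Tendsto g (𝓝[<] b) (𝓝 L) := by
  rw [← nhdsWithin_Ico_eq_nhdsLT hab]
  have : (𝓝[Ico a b] b).NeBot := by rw [nhdsWithin_Ico_eq_nhdsLT hab]; infer_instance
  exact CompleteSpace.complete (((cauchy_nhds).mono nhdsWithin_le_nhds).map_of_le hg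
    inf_le_right)

section

variable {E : Type*} [NormedAddCommGroup E]

theorem intervalIntegrable_of_norm_le_div_sqrt {g : ℝ → E} {K τ a b : ℝ} (hτa : τ ≤ a)
    (hab : a ≤ b) (hcont : ContinuousOn g (Ioc a b)) (hg : ∀ s ∈ Ioc a b, ‖g s‖ ≤ K / √(s - τ)) :
    IntervalIntegrable g volume a b := by
  rw [intervalIntegrable_iff_integrableOn_Ioc_of_le hab]
  refine Integrable.mono' ?_ (hcont.aestronglyMeasurable measurableSet_Ioc)
    ((ae_restrict_iff' measurableSet_Ioc).2 (ae_of_all _ hg))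
  exact ((intervalIntegrable_iff_integrableOn_Ioc_of_le hab).1
    ((intervalIntegrable_inv_sqrt_sub hτa (hτa.trans hab)).const_mul K))

structure IsWeaklySingularKernel (k : ℝ → ℝ → E) (K T : ℝ) : Prop where
  continuousOn : ContinuousOn (uncurry k) {x | 0 ≤ x.1 ∧ x.1 < x.2 ∧ x.2 < T}
  norm_le : ∀ τ s, 0 ≤ τ → τ < s → s < T → ‖k τ s‖ ≤ K / √(s - τ)

namespace IsWeaklySingularKernel

variable {k : ℝ → ℝ → E} {K T : ℝ}

theorem nonneg (hk : IsWeaklySingularKernel k K T) (hT : 0 < T) : 0 ≤ K := by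
  have h := (norm_nonneg _).trans (hk.norm_le 0 (T / 2) le_rfl (half_pos hT) (half_lt_self hT))
  exact (div_nonneg_iff.1 h).elim And.left fun h' => by
    linarith [sqrt_pos.2 (show 0 < T / 2 - 0 by linarith)]

theorem intervalIntegrable (hk : IsWeaklySingularKernel k K T) {τ a b : ℝ} (hτ : 0 ≤ τ)
    (hτa : τ ≤ a) (hab : a ≤ b) (hb : b < T) : IntervalIntegrable (k τ) volume a b := by
  have hsub : ∀ s ∈ Ioc a b, τ < s ∧ s < T := fun s hs => ⟨hτa.trans_lt hs.1, hs.2.trans_lt hb⟩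
  refine intervalIntegrable_of_norm_le_div_sqrt hτa hab ?_
    fun s hs => hk.norm_le τ s hτ (hsub s hs).1 (hsub s hs).2
  exact hk.continuousOn.comp (continuousOn_const.prodMk continuousOn_id)
    fun s hs => ⟨hτ, (hsub s hs).1, (hsub s hs).2⟩

end IsWeaklySingularKernel

variable [NormedSpace ℝ E]

theorem norm_integral_le_of_norm_le_div_sqrt {g : ℝ → E} {K τ a b : ℝ} (hτa : τ ≤ a)
    (hab : a ≤ b) (hg : ∀ s ∈ Ioc a b, ‖g s‖ ≤ K / √(s - τ)) :
    ‖∫ s in a..b, g s‖ ≤ 2 * K * (√(b - τ) - √(a - τ)) := by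
  have hint := (intervalIntegrable_inv_sqrt_sub hτa (hτa.trans hab)).const_mul K
  calc ‖∫ s in a..b, g s‖ ≤ ∫ s in a..b, K * (√(s - τ))⁻¹ :=
        intervalIntegral.norm_integral_le_of_norm_le hab (ae_of_all _ hg) hint
    _ = 2 * K * (√(b - τ) - √(a - τ)) := by
        rw [intervalIntegral.integral_const_mul, integral_inv_sqrt_sub hτa (hτa.trans hab)]
        ring

theorem aestronglyMeasurable_integral_triangle {k : ℝ → ℝ → E} {a t : ℝ}
    (hk : ContinuousOn (uncurry k) {x | a < x.1 ∧ x.1 < x.2 ∧ x.2 ≤ t}) :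
    AEStronglyMeasurable (fun τ => ∫ s in τ..t, k τ s) (volume.restrict (Ioc a t)) := by
  set S : Set (ℝ × ℝ) := {x | a < x.1 ∧ x.1 < x.2 ∧ x.2 ≤ t}
  have hS : MeasurableSet S :=
    (measurableSet_lt measurable_const measurable_fst).inter
      ((measurableSet_lt measurable_fst measurable_snd).inter
        (measurableSet_le measurable_snd measurable_const))
  have hkS : AEStronglyMeasurable (S.indicator (uncurry k)) (volume.prod volume) :=
    (aestronglyMeasurable_indicator_iff hS).2 (hk.aestronglyMeasurable hS)
  refine hkS.integral_prod_right'.restrict.congr ?_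
  refine (ae_restrict_iff' measurableSet_Ioc).2 (ae_of_all _ fun τ hτ => ?_)
  have hslice : (fun s => S.indicator (uncurry k) (τ, s)) = (Ioc τ t).indicator (k τ) := by
    ext s
    by_cases hs : s ∈ Ioc τ t
    · rw [indicator_of_mem (show (τ, s) ∈ S from ⟨hτ.1, hs⟩), indicator_of_mem hs,
        uncurry_apply_pair]
    · rw [indicator_of_notMem (fun h => hs h.2), indicator_of_notMem hs]
  simp only [hslice, integral_indicator measurableSet_Ioc, intervalIntegral.integral_of_le hτ.2]

theorem norm_heatKernel_smul_le {a η D c z : ℝ} (ha : 0 ≤ a) (hη : 0 ≤ η) (hD : 0 < D)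
    (hz : 0 < z) {v : E} (hv : ‖v‖ ≤ c * √(4 * D * z)) :
    ‖(a * exp (-η * z) / (4 * π * D * z)) • v‖ ≤ a * c / (2 * π * √D) / √z := by
  have hsqrt : √(4 * D * z) = 2 * √D * √z := by
    rw [sqrt_mul (by positivity), sqrt_mul (by norm_num), show (4 : ℝ) = 2 ^ 2 by norm_num,
      sqrt_sq zero_le_two]
  have hc : 0 ≤ c := nonneg_of_mul_nonneg_left ((norm_nonneg v).trans hv) (by positivity)
  have hexp : exp (-η * z) ≤ 1 := exp_le_one_iff.2 (by nlinarith)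
  rw [norm_smul, norm_of_nonneg (by positivity)]
  calc a * exp (-η * z) / (4 * π * D * z) * ‖v‖
      ≤ a / (4 * π * D * z) * (c * √(4 * D * z)) := by
        gcongr
        · exact mul_le_of_le_one_right ha hexp
    _ = a * c / (2 * π * √D) / √z := by
        rw [hsqrt]
        field_simp
        rw [sq_sqrt hD.le, sq_sqrt hz.le]
        ring

theorem continuousOn_delayKernel {F : Type*} [TopologicalSpace F] {C : ℝ → ℝ}
    {p : ℝ → F → F → E} {y : ℝ → F} {T : ℝ} (hC : ContinuousOn C (Ioi 0))
    (hp : ContinuousOn (fun x : ℝ × F × F => p x.1 x.2.1 x.2.2) (Ioi 0 ×ˢ univ))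
    (hy : ContinuousOn y (Ico 0 T)) :
    ContinuousOn (uncurry fun τ s => C (s - τ) • p (s - τ) (y s) (y τ))
      {x | 0 ≤ x.1 ∧ x.1 < x.2 ∧ x.2 < T} := by
  have hpos : MapsTo (fun x : ℝ × ℝ => x.2 - x.1) {x | 0 ≤ x.1 ∧ x.1 < x.2 ∧ x.2 < T} (Ioi 0) :=
    fun x hx => sub_pos.2 hx.2.1
  have hy₁ : ContinuousOn (fun x : ℝ × ℝ => y x.1) {x | 0 ≤ x.1 ∧ x.1 < x.2 ∧ x.2 < T} :=
    hy.comp continuousOn_fst fun x hx => ⟨hx.1, hx.2.1.trans hx.2.2⟩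
  have hy₂ : ContinuousOn (fun x : ℝ × ℝ => y x.2) {x | 0 ≤ x.1 ∧ x.1 < x.2 ∧ x.2 < T} :=
    hy.comp continuousOn_snd fun x hx => ⟨hx.1.trans hx.2.1.le, hx.2.2⟩
  exact (hC.comp (by fun_prop) hpos).smul (hp.comp ((continuousOn_snd.sub continuousOn_fst).prodMk
    (hy₂.prodMk hy₁)) fun x hx => ⟨hpos hx, mem_univ _⟩)

namespace IsWeaklySingularKernel

variable {k : ℝ → ℝ → E} {K T : ℝ} {f y : ℝ → E} {y₀ : E}

theorem norm_integral_le (hk : IsWeaklySingularKernel k K T) {τ a b : ℝ} (hτ : 0 ≤ τ)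
    (hτa : τ ≤ a) (hab : a ≤ b) (hb : b < T) : ‖∫ s in a..b, k τ s‖ ≤ 2 * K * √(b - a) := by
  have hK := hk.nonneg (hτ.trans_lt ((hτa.trans hab).trans_lt hb))
  calc ‖∫ s in a..b, k τ s‖ ≤ 2 * K * (√(b - τ) - √(a - τ)) :=
        norm_integral_le_of_norm_le_div_sqrt hτa hab fun s hs =>
          hk.norm_le τ s hτ (hτa.trans_lt hs.1) (hs.2.trans_lt hb)
    _ ≤ 2 * K * √(b - a) := by
        gcongr
        simpa using sqrt_sub_sqrt_le_sqrt_sub (sub_nonneg.2 hτa) (sub_le_sub_right hab τ)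

theorem intervalIntegrable_volterra (hk : IsWeaklySingularKernel k K T)
    (hf : ContinuousOn f (Ico 0 T)) {a b t : ℝ} (ha : 0 ≤ a) (hab : a ≤ b) (hbt : b ≤ t)
    (ht : t < T) : IntervalIntegrable (fun τ => f τ + ∫ s in τ..t, k τ s) volume a b := by
  have hsub : Icc a b ⊆ Ico 0 T := fun τ hτ => ⟨ha.trans hτ.1, (hτ.2.trans hbt).trans_lt ht⟩
  refine .add ((hf.mono hsub).intervalIntegrable_of_Icc hab) ?_
  rw [intervalIntegrable_iff_integrableOn_Ioc_of_le hab]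
  have hmeas : AEStronglyMeasurable (fun τ => ∫ s in τ..t, k τ s) (volume.restrict (Ioc a b)) :=
    (aestronglyMeasurable_integral_triangle (hk.continuousOn.mono fun x hx =>
      ⟨ha.trans hx.1.le, hx.2.1, hx.2.2.trans_lt ht⟩)).mono_measure
      (Measure.restrict_mono (Ioc_subset_Ioc le_rfl hbt) le_rfl)
  refine Integrable.mono' (integrableOn_const (C := 2 * K * √T) measure_Ioc_lt_top.ne) hmeas
    ((ae_restrict_iff' measurableSet_Ioc).2 (ae_of_all _ fun τ hτab => ?_))
  have hτ : 0 ≤ τ := ha.trans hτab.1.le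
  calc ‖∫ s in τ..t, k τ s‖ ≤ 2 * K * √(t - τ) :=
        hk.norm_integral_le hτ le_rfl (hτab.2.trans hbt) ht
    _ ≤ 2 * K * √T := by
        have := hk.nonneg (hτ.trans_lt ((hτab.2.trans hbt).trans_lt ht))
        gcongr
        linarith

theorem volterra_sub_eq (hk : IsWeaklySingularKernel k K T) (hf : ContinuousOn f (Ico 0 T))
    (hy : ∀ t ∈ Ico 0 T, y t = y₀ + ∫ τ in 0..t, (f τ + ∫ s in τ..t, k τ s))
    {t₁ t₂ : ℝ} (h₀ : 0 ≤ t₁) (h₁₂ : t₁ ≤ t₂) (h₂ : t₂ < T) :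
    y t₂ - y t₁ = (∫ τ in 0..t₁, ∫ s in t₁..t₂, k τ s) +
      ∫ τ in t₁..t₂, (f τ + ∫ s in τ..t₂, k τ s) := by
  have h₁ : t₁ < T := h₁₂.trans_lt h₂
  have hI₂ := hk.intervalIntegrable_volterra hf le_rfl h₀ h₁₂ h₂
  have hI₂' := hk.intervalIntegrable_volterra hf h₀ h₁₂ le_rfl h₂
  have hI₁ := hk.intervalIntegrable_volterra hf le_rfl h₀ le_rfl h₁
  have hinner : EqOn (fun τ => (f τ + ∫ s in τ..t₂, k τ s) - (f τ + ∫ s in τ..t₁, k τ s))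
      (fun τ => ∫ s in t₁..t₂, k τ s) [[0, t₁]] := fun τ hτ => by
    rw [uIcc_of_le h₀] at hτ
    simp only [add_sub_add_left_eq_sub]
    exact intervalIntegral.integral_interval_sub_left
      (hk.intervalIntegrable hτ.1 le_rfl (hτ.2.trans h₁₂) h₂)
      (hk.intervalIntegrable hτ.1 le_rfl hτ.2 h₁)
  rw [hy t₂ ⟨h₀.trans h₁₂, h₂⟩, hy t₁ ⟨h₀, h₁⟩, add_sub_add_left_eq_sub,
    ← intervalIntegral.integral_add_adjacent_intervals hI₂ hI₂',
    ← intervalIntegral.integral_congr hinner, intervalIntegral.integral_sub hI₂ hI₁]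
  abel

theorem norm_volterra_sub_le (hk : IsWeaklySingularKernel k K T)
    (hf : ContinuousOn f (Ico 0 T)) {M : ℝ} (hfM : ∀ τ ∈ Ico 0 T, ‖f τ‖ ≤ M)
    (hy : ∀ t ∈ Ico 0 T, y t = y₀ + ∫ τ in 0..t, (f τ + ∫ s in τ..t, k τ s))
    {t₁ t₂ : ℝ} (h₀ : 0 ≤ t₁) (h₁₂ : t₁ ≤ t₂) (h₂ : t₂ < T) :
    ‖y t₂ - y t₁‖ ≤ (M + 2 * K * √T) * (t₂ - t₁) + 2 * K * T * √(t₂ - t₁) := by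
  have hK := hk.nonneg ((h₀.trans h₁₂).trans_lt h₂)
  have hpast : ‖∫ τ in 0..t₁, ∫ s in t₁..t₂, k τ s‖ ≤ 2 * K * √(t₂ - t₁) * |t₁ - 0| :=
    intervalIntegral.norm_integral_le_of_norm_le_const fun τ hτ => by
      rw [uIoc_of_le h₀] at hτ
      exact hk.norm_integral_le hτ.1.le hτ.2 h₁₂ h₂
  have hrecent : ‖∫ τ in t₁..t₂, (f τ + ∫ s in τ..t₂, k τ s)‖ ≤ (M + 2 * K * √T) * |t₂ - t₁| :=
    intervalIntegral.norm_integral_le_of_norm_le_const fun τ hτ => by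
      rw [uIoc_of_le h₁₂] at hτ
      have hτ₀ : 0 ≤ τ := h₀.trans hτ.1.le
      refine (norm_add_le _ _).trans (add_le_add (hfM τ ⟨hτ₀, hτ.2.trans_lt h₂⟩) ?_)
      calc ‖∫ s in τ..t₂, k τ s‖ ≤ 2 * K * √(t₂ - τ) := hk.norm_integral_le hτ₀ le_rfl hτ.2 h₂
        _ ≤ 2 * K * √T := by gcongr; linarith
  rw [sub_zero, abs_of_nonneg h₀] at hpast
  rw [abs_of_nonneg (sub_nonneg.2 h₁₂)] at hrecent
  have ht₁ : 2 * K * √(t₂ - t₁) * t₁ ≤ 2 * K * T * √(t₂ - t₁) := by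
    rw [mul_right_comm]
    gcongr
    linarith
  rw [volterra_sub_eq hk hf hy h₀ h₁₂ h₂]
  linarith [norm_add_le (∫ τ in 0..t₁, ∫ s in t₁..t₂, k τ s)
    (∫ τ in t₁..t₂, (f τ + ∫ s in τ..t₂, k τ s))]

end IsWeaklySingularKernel

end

theorem continuation_principle_general
    (N : ℕ)
    (γ ξ η D : ℝ) (hγ : 0 < γ) (hξ : 0 < ξ) (hη : 0 < η) (hD : 0 < D)
    (C : ℝ → ℝ) (hC : ∀ z > 0, C z = γ * ξ * Real.exp (-η * z) / (4 * Real.pi * D * z))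
    (y₀ : EuclideanSpace ℝ (Fin (4 * N))) (P T : ℝ) (hT : 0 < T)
    (q : EuclideanSpace ℝ (Fin (4 * N)) → EuclideanSpace ℝ (Fin (4 * N)))
    (hq : Continuous q)
    (p : ℝ → EuclideanSpace ℝ (Fin (4 * N)) → EuclideanSpace ℝ (Fin (4 * N)) →
      EuclideanSpace ℝ (Fin (4 * N)))
    (hp : ContinuousOn
      (fun x : ℝ × EuclideanSpace ℝ (Fin (4 * N)) × EuclideanSpace ℝ (Fin (4 * N)) =>
        p x.1 x.2.1 x.2.2) (Set.Ioi (0 : ℝ) ×ˢ Set.univ))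
    (Mbar : ℝ)
    (hpBound : ∀ h > (0 : ℝ), ∀ u ∈ closedBall y₀ P, ∀ v ∈ closedBall y₀ P,
      ‖p h u v‖ ≤ Mbar * Real.sqrt (2 * N) * Real.sqrt (4 * D * h))
    (y : ℝ → EuclideanSpace ℝ (Fin (4 * N)))
    (hy : ContinuousOn y (Set.Ico 0 T))
    (hyP : ∀ t ∈ Set.Ico 0 T, ‖y t - y₀‖ ≤ P)
    (heq : ∀ t ∈ Set.Ico 0 T,
      y t = y₀ + ∫ τ in (0 : ℝ)..t,
        (q (y τ) + ∫ s in τ..t, C (s - τ) • p (s - τ) (y s) (y τ))) :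
    (∃ L : EuclideanSpace ℝ (Fin (4 * N)),
      Filter.Tendsto y (nhdsWithin T (Set.Iio T)) (nhds L)) ∧
    ∀ tseq : ℕ → ℝ, Monotone tseq → (∀ n, tseq n ∈ Set.Ico 0 T) →
      Filter.Tendsto tseq Filter.atTop (nhds T) → CauchySeq (fun n => y (tseq n)) := by
  have hyB : ∀ t ∈ Ico 0 T, y t ∈ closedBall y₀ P := fun t ht =>
    mem_closedBall_iff_norm.2 (hyP t ht)
  obtain ⟨M, hM⟩ := (isCompact_closedBall y₀ P).exists_bound_of_continuousOn hq.continuousOn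
  set K := γ * ξ * (Mbar * √(2 * N)) / (2 * π * √D)
  have hk : IsWeaklySingularKernel (fun τ s => C (s - τ) • p (s - τ) (y s) (y τ)) K T := by
    refine ⟨continuousOn_delayKernel ((continuousOn_heatKernel hD.ne').congr hC) hp hy,
      fun τ s hτ hτs hs => ?_⟩
    rw [hC _ (sub_pos.2 hτs)]
    exact norm_heatKernel_smul_le (by positivity) hη.le hD (sub_pos.2 hτs)
      (hpBound _ (sub_pos.2 hτs) _ (hyB s ⟨hτ.trans hτs.le, hs⟩) _ (hyB τ ⟨hτ, hτs.trans hs⟩))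
  have hyuc : UniformContinuousOn y (Ico 0 T) := by
    refine uniformContinuousOn_of_dist_le_modulus
      (ω := fun d => (M + 2 * K * √T) * d + 2 * K * T * √d) ?_
      fun t₁ ht₁ t₂ ht₂ h₁₂ => (dist_eq_norm' _ _).trans_le
        (hk.norm_volterra_sub_le (hq.comp_continuousOn hy) (fun τ hτ => hM _ (hyB τ hτ)) heq
          ht₁.1 h₁₂ ht₂.2)
    exact (by fun_prop : Continuous fun d : ℝ => (M + 2 * K * √T) * d + 2 * K * T * √d).tendsto'
      0 0 (by simp)
  obtain ⟨L, hL⟩ := hyuc.exists_tendsto_nhdsLT hT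
  refine ⟨⟨L, hL⟩, fun tseq _ htseq hlim => (hL.comp ?_).cauchySeq⟩
  exact tendsto_nhdsWithin_of_tendsto_nhds_of_eventually_within _ hlim
    (Eventually.of_forall fun n => (htseq n).2)

/-- **Continuation principle (Proposition 4.1)** for the delayed Volterra integral
equation of the hybrid alignment–chemotaxis model: a solution bounded on `[0,T)`
has a limit as `t → T⁻`; in particular `y(tₙ)` is Cauchy along every monotone
increasing sequence `tₙ → T`. -/
theorem continuation_principle
    (N : ℕ) (hN : 1 ≤ N)
    (γ ξ η D : ℝ) (hγ : 0 < γ) (hξ : 0 < ξ) (hη : 0 < η) (hD : 0 < D)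
    (C : ℝ → ℝ) (hC : ∀ z > 0, C z = γ * ξ * Real.exp (-η * z) / (4 * Real.pi * D * z))
    (y₀ : EuclideanSpace ℝ (Fin (4 * N))) (P T : ℝ) (hP : 0 < P) (hT : 0 < T)
    (q : EuclideanSpace ℝ (Fin (4 * N)) → EuclideanSpace ℝ (Fin (4 * N)))
    (hq : Continuous q)
    (p : ℝ → EuclideanSpace ℝ (Fin (4 * N)) → EuclideanSpace ℝ (Fin (4 * N)) →
      EuclideanSpace ℝ (Fin (4 * N)))
    (hp : ContinuousOn
      (fun x : ℝ × EuclideanSpace ℝ (Fin (4 * N)) × EuclideanSpace ℝ (Fin (4 * N)) =>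
        p x.1 x.2.1 x.2.2) (Set.Ioi (0 : ℝ) ×ˢ Set.univ))
    (Mbar : ℝ) (hMbar : 0 < Mbar)
    (hpBound : ∀ h > (0 : ℝ), ∀ u ∈ closedBall y₀ P, ∀ v ∈ closedBall y₀ P,
      ‖p h u v‖ ≤ Mbar * Real.sqrt (2 * N) * Real.sqrt (4 * D * h))
    (y : ℝ → EuclideanSpace ℝ (Fin (4 * N)))
    (hy : ContinuousOn y (Set.Ico 0 T))
    (hyP : ∀ t ∈ Set.Ico 0 T, ‖y t - y₀‖ ≤ P)
    (heq : ∀ t ∈ Set.Ico 0 T,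
      y t = y₀ + ∫ τ in (0 : ℝ)..t,
        (q (y τ) + ∫ s in τ..t, C (s - τ) • p (s - τ) (y s) (y τ))) :
    (∃ L : EuclideanSpace ℝ (Fin (4 * N)),
      Filter.Tendsto y (nhdsWithin T (Set.Iio T)) (nhds L)) ∧
    ∀ tseq : ℕ → ℝ, Monotone tseq → (∀ n, tseq n ∈ Set.Ico 0 T) →
      Filter.Tendsto tseq Filter.atTop (nhds T) → CauchySeq (fun n => y (tseq n)) :=
  continuation_principle_general N γ ξ η D hγ hξ hη hD C hC y₀ P T hT q hq p hp Mbar hpBound y hy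
    hyP heq
end

section
/- Let β, γ, ξ, η, D, R > 0, N ∈ ℕ with N ≥ 1, define C̄(z) = γξR² e^{-R²/(4zD) - ηz}/(8z²D²) for z > 0 and g(t) = N ∫₀^t C̄(z) dz for t ≥ 0. Fix t̄ > 0. Then there exist positive constants k₁, k₂, k₃ and a function U : [t̄,∞) × ℝ² → ℝ, given explicitly by U(t, V, X) = (V² + kXV + g(t)X²)·e^{-g(t)/g(t̄)} for a suitable constant k > 0, such that for all t ≥ t̄ and all (V,X) ∈ ℝ²: (a) k₂(V² + X²) ≤ U(t, V, X) ≤ k₁(V² + X²); and (b) ∂U/∂t + (∂U/∂V)·(-βV - g(t)X) + (∂U/∂X)·V ≤ -k₃(V² + X²). -/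
/-!
Along the flow, the derivative of `U = Q · e^{-g/g(t̄)}`, with `Q = V² + kXV + gX²`, is
`e^{-g/g(t̄)}` times a quadratic form in `(V, X)`: the damping factor turns the term `g' X²`
coming from `∂ₜQ` into `(g'/g(t̄)) (g(t̄) - g) X² ≤ 0`, and the only indefinite term left
is `-k (β + g'/g(t̄)) XV`. Since `g' = N C̄` is bounded (`C̄(z) ≤ 4γξ/R² · e^{-ηz}`),
AM–GM makes the form negative definite once `k` is small. The equivalence of `U` with
`V² + X²` comes from `0 < g(t̄) ≤ g(t) ≤ N ∫₀^∞ C̄ < ∞`.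
-/

open MeasureTheory Set

section IntegralFromZero

variable {f : ℝ → ℝ}

lemma integrableOn_Ioi_of_le_exp {B η : ℝ} (hη : 0 < η) (hf : ContinuousOn f (Ioi 0))
    (hf0 : ∀ z > 0, 0 ≤ f z) (hfB : ∀ z > 0, f z ≤ B * Real.exp (-η * z)) :
    IntegrableOn f (Ioi 0) :=
  ((exp_neg_integrableOn_Ioi 0 hη).const_mul B).mono' (hf.aestronglyMeasurable measurableSet_Ioi)
    (ae_restrict_of_forall_mem measurableSet_Ioi fun z hz => by
      rw [Real.norm_of_nonneg (hf0 z hz)]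
      exact hfB z hz)

lemma intervalIntegrable_zero_of_integrableOn_Ioi (hf : IntegrableOn f (Ioi 0)) {t : ℝ}
    (ht : 0 ≤ t) : IntervalIntegrable f volume 0 t :=
  (intervalIntegrable_iff_integrableOn_Ioc_of_le ht).2 (hf.mono_set Ioc_subset_Ioi_self)

lemma hasDerivAt_integral_zero (hf : IntegrableOn f (Ioi 0)) (hfc : ContinuousOn f (Ioi 0))
    {t : ℝ} (ht : 0 < t) : HasDerivAt (fun u => ∫ z in (0 : ℝ)..u, f z) (f t) t :=
  intervalIntegral.integral_hasDerivAt_right (intervalIntegrable_zero_of_integrableOn_Ioi hf ht.le)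
    (hfc.stronglyMeasurableAtFilter isOpen_Ioi t ht) (hfc.continuousAt (Ioi_mem_nhds ht))

lemma integral_zero_le_integral_Ioi (hf : IntegrableOn f (Ioi 0)) (hf0 : ∀ z > 0, 0 ≤ f z)
    {t : ℝ} (ht : 0 ≤ t) : ∫ z in (0 : ℝ)..t, f z ≤ ∫ z in Ioi 0, f z := by
  rw [intervalIntegral.integral_of_le ht]
  exact setIntegral_mono_set hf (ae_restrict_of_forall_mem measurableSet_Ioi hf0)
    Ioc_subset_Ioi_self.eventuallyLE

lemma integral_zero_pos (hf : IntegrableOn f (Ioi 0)) (hf0 : ∀ z > 0, 0 < f z) {t : ℝ}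
    (ht : 0 < t) : 0 < ∫ z in (0 : ℝ)..t, f z :=
  intervalIntegral.intervalIntegral_pos_of_pos_on
    (intervalIntegrable_zero_of_integrableOn_Ioi hf ht.le) (fun z hz => hf0 z hz.1) ht

end IntegralFromZero

lemma exp_neg_div_le {a z : ℝ} (ha : 0 < a) (hz : 0 < z) :
    Real.exp (-(a / z)) ≤ 2 * z ^ 2 / a ^ 2 := by
  have h := Real.pow_div_factorial_le_exp (a / z) (by positivity) 2
  have h2 : 2 * z ^ 2 / a ^ 2 = ((a / z) ^ 2 / 2)⁻¹ := by field_simp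
  rw [Real.exp_neg, h2]
  exact inv_anti₀ (by positivity) (by simpa [Nat.factorial] using h)

section ChemotaxisKernel

noncomputable def chemotaxisKernel (γ ξ η D R z : ℝ) : ℝ :=
  γ * ξ * R ^ 2 * Real.exp (-R ^ 2 / (4 * z * D) - η * z) / (8 * z ^ 2 * D ^ 2)

variable {γ ξ η D R : ℝ}

lemma chemotaxisKernel_pos (hγ : 0 < γ) (hξ : 0 < ξ) (hD : 0 < D) (hR : 0 < R) {z : ℝ}
    (hz : 0 < z) : 0 < chemotaxisKernel γ ξ η D R z := by
  unfold chemotaxisKernel; positivity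

lemma chemotaxisKernel_le (hγ : 0 < γ) (hξ : 0 < ξ) (hD : 0 < D) (hR : 0 < R) {z : ℝ}
    (hz : 0 < z) :
    chemotaxisKernel γ ξ η D R z ≤ 4 * γ * ξ / R ^ 2 * Real.exp (-η * z) := by
  have hsplit : -R ^ 2 / (4 * z * D) - η * z = -(R ^ 2 / (4 * D) / z) + -η * z := by
    field_simp; ring
  have hexp := exp_neg_div_le (a := R ^ 2 / (4 * D)) (by positivity) hz
  calc chemotaxisKernel γ ξ η D R z
      = γ * ξ * R ^ 2 / (8 * z ^ 2 * D ^ 2) * Real.exp (-(R ^ 2 / (4 * D) / z))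
          * Real.exp (-η * z) := by
        rw [chemotaxisKernel, hsplit, Real.exp_add]; ring
    _ ≤ γ * ξ * R ^ 2 / (8 * z ^ 2 * D ^ 2) * (2 * z ^ 2 / (R ^ 2 / (4 * D)) ^ 2)
          * Real.exp (-η * z) := by gcongr
    _ = 4 * γ * ξ / R ^ 2 * Real.exp (-η * z) := by field_simp; ring

lemma continuousOn_chemotaxisKernel (hD : 0 < D) :
    ContinuousOn (chemotaxisKernel γ ξ η D R) (Ioi 0) := by
  intro z (hz : 0 < z)
  unfold chemotaxisKernel
  apply ContinuousAt.continuousWithinAt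
  fun_prop (disch := positivity)

end ChemotaxisKernel

section QuadraticForm

variable {k a b G V X : ℝ}

lemma quadratic_form_lower (hk0 : 0 ≤ k) (hk1 : k ≤ 1) (hka : k ≤ a) (hab : a ≤ b) :
    min (1 / 2) (a / 2) * (V ^ 2 + X ^ 2) ≤ V ^ 2 + k * X * V + b * X ^ 2 := by
  have hm1 := min_le_left (1 / 2 : ℝ) (a / 2)
  have hm2 := min_le_right (1 / 2 : ℝ) (a / 2)
  nlinarith [mul_nonneg hk0 (sq_nonneg (V + X)), sq_nonneg V, sq_nonneg X,
    mul_le_mul_of_nonneg_right hm1 (sq_nonneg V), mul_le_mul_of_nonneg_right hm2 (sq_nonneg X),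
    mul_nonneg (sub_nonneg.2 hab) (sq_nonneg X)]

lemma quadratic_form_upper (hk : 0 ≤ k) (hb : 0 ≤ b) (hbG : b ≤ G) :
    V ^ 2 + k * X * V + b * X ^ 2 ≤ (1 + k + G) * (V ^ 2 + X ^ 2) := by
  nlinarith [mul_nonneg hk (sq_nonneg (V - X)), mul_nonneg hk (sq_nonneg V),
    mul_nonneg hk (sq_nonneg X), mul_nonneg (hb.trans hbG) (sq_nonneg V),
    mul_le_mul_of_nonneg_right hbG (sq_nonneg X)]

end QuadraticForm

lemma orbital_derivative_eq {g : ℝ → ℝ} {w t gb k β V X : ℝ} (hg : HasDerivAt g w t)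
    (hgb : gb ≠ 0) :
    deriv (fun s => (V ^ 2 + k * X * V + g s * X ^ 2) * Real.exp (-(g s) / gb)) t
        + (deriv (fun v => (v ^ 2 + k * X * v + g t * X ^ 2) * Real.exp (-(g t) / gb)) V)
          * (-β * V - g t * X)
        + (deriv (fun x => (V ^ 2 + k * x * V + g t * x ^ 2) * Real.exp (-(g t) / gb)) X) * V
      = Real.exp (-(g t) / gb) * ((k - 2 * β - w / gb) * V ^ 2 - k * (β + w / gb) * (X * V)
          + (w / gb * (gb - g t) - k * g t) * X ^ 2) := by
  set E := Real.exp (-(g t) / gb)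
  have hs : HasDerivAt (fun s => (V ^ 2 + k * X * V + g s * X ^ 2) * Real.exp (-(g s) / gb))
      (w * X ^ 2 * E + (V ^ 2 + k * X * V + g t * X ^ 2) * (E * (-w / gb))) t :=
    ((hg.mul_const (X ^ 2)).const_add _).mul (hg.neg.div_const gb).exp
  have hv : HasDerivAt (fun v => (v ^ 2 + k * X * v + g t * X ^ 2) * E)
      ((2 * V + k * X) * E) V := by
    have := (((hasDerivAt_pow 2 V).add ((hasDerivAt_id V).const_mul (k * X))).add_const
      (g t * X ^ 2)).mul_const E
    simpa using this
  have hx : HasDerivAt (fun x => (V ^ 2 + k * x * V + g t * x ^ 2) * E)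
      ((k * V + g t * (2 * X)) * E) X := by
    have := (((((hasDerivAt_id X).const_mul k).mul_const V).const_add (V ^ 2)).add
      ((hasDerivAt_pow 2 X).const_mul (g t))).mul_const E
    simpa using this
  rw [hs.deriv, hv.deriv, hx.deriv]
  field_simp
  ring

lemma orbital_bracket_le {β k gb b p V X : ℝ} (hk : 0 < k) (hgb : 0 < gb) (hb : gb ≤ b)
    (hp : 0 ≤ p) (hkβ : k * (2 * gb + (β + p) ^ 2) ≤ 2 * gb * β) :
    (k - 2 * β - p) * V ^ 2 - k * (β + p) * (X * V) + (p * (gb - b) - k * b) * X ^ 2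
      ≤ -(β * V ^ 2 + k * gb / 2 * X ^ 2) := by
  have hAMGM : -((β + p) * (X * V)) * (2 * gb) ≤ (β + p) ^ 2 * V ^ 2 + gb ^ 2 * X ^ 2 := by
    nlinarith [sq_nonneg ((β + p) * V + gb * X)]
  have hkV : k * (β + p) ^ 2 * V ^ 2 ≤ (2 * gb * β - 2 * gb * k) * V ^ 2 := by
    nlinarith [sq_nonneg V]
  nlinarith [mul_le_mul_of_nonneg_left hAMGM hk.le, mul_nonneg hp (sq_nonneg V),
    mul_nonneg (mul_nonneg hp (sub_nonneg.2 hb)) (sq_nonneg X),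
    mul_nonneg (mul_nonneg hk.le (sub_nonneg.2 hb)) (sq_nonneg X)]

section Lyapunov

variable {β k gb b G M w t V X : ℝ} {g : ℝ → ℝ}

lemma lyapunov_bounds (hk0 : 0 ≤ k) (hk1 : k ≤ 1) (hkg : k ≤ gb) (hgb : 0 < gb)
    (hb : gb ≤ b) (hbG : b ≤ G) :
    min (1 / 2) (gb / 2) * Real.exp (-G / gb) * (V ^ 2 + X ^ 2)
        ≤ (V ^ 2 + k * X * V + b * X ^ 2) * Real.exp (-b / gb) ∧
      (V ^ 2 + k * X * V + b * X ^ 2) * Real.exp (-b / gb) ≤ (1 + k + G) * (V ^ 2 + X ^ 2) := by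
  have hQ := quadratic_form_lower (V := V) (X := X) hk0 hk1 hkg hb
  have hQ0 : 0 ≤ V ^ 2 + k * X * V + b * X ^ 2 := le_trans (by positivity) hQ
  have hE : Real.exp (-G / gb) ≤ Real.exp (-b / gb) := by gcongr
  have hE1 : Real.exp (-b / gb) ≤ 1 :=
    Real.exp_le_one_iff.2 (div_nonpos_of_nonpos_of_nonneg (by linarith) hgb.le)
  constructor
  · calc min (1 / 2) (gb / 2) * Real.exp (-G / gb) * (V ^ 2 + X ^ 2)
        = min (1 / 2) (gb / 2) * (V ^ 2 + X ^ 2) * Real.exp (-G / gb) := by ring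
      _ ≤ (V ^ 2 + k * X * V + b * X ^ 2) * Real.exp (-b / gb) :=
        mul_le_mul hQ hE (by positivity) hQ0
  · calc (V ^ 2 + k * X * V + b * X ^ 2) * Real.exp (-b / gb)
        ≤ V ^ 2 + k * X * V + b * X ^ 2 := mul_le_of_le_one_right hQ0 hE1
      _ ≤ (1 + k + G) * (V ^ 2 + X ^ 2) := quadratic_form_upper hk0 (hgb.le.trans hb) hbG

lemma lyapunov_orbital_derivative_le (hβ : 0 ≤ β) (hg : HasDerivAt g w t) (hw0 : 0 ≤ w)
    (hwM : w ≤ M) (hk : 0 < k) (hgb : 0 < gb) (hgt : gb ≤ g t) (hG : g t ≤ G)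
    (hkβ : k * (2 * gb + (β + M / gb) ^ 2) ≤ 2 * gb * β) :
    deriv (fun s => (V ^ 2 + k * X * V + g s * X ^ 2) * Real.exp (-(g s) / gb)) t
        + (deriv (fun v => (v ^ 2 + k * X * v + g t * X ^ 2) * Real.exp (-(g t) / gb)) V)
          * (-β * V - g t * X)
        + (deriv (fun x => (V ^ 2 + k * x * V + g t * x ^ 2) * Real.exp (-(g t) / gb)) X) * V
      ≤ -(Real.exp (-G / gb) * min β (k * gb / 2)) * (V ^ 2 + X ^ 2) := by
  rw [orbital_derivative_eq hg hgb.ne']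
  have hp : 0 ≤ w / gb := div_nonneg hw0 hgb.le
  have hkβ' : k * (2 * gb + (β + w / gb) ^ 2) ≤ 2 * gb * β := le_trans (by gcongr) hkβ
  have hbracket := orbital_bracket_le (V := V) (X := X) hk hgb hgt hp hkβ'
  have hmin : min β (k * gb / 2) * (V ^ 2 + X ^ 2) ≤ β * V ^ 2 + k * gb / 2 * X ^ 2 := by
    nlinarith [mul_le_mul_of_nonneg_right (min_le_left β (k * gb / 2)) (sq_nonneg V),
      mul_le_mul_of_nonneg_right (min_le_right β (k * gb / 2)) (sq_nonneg X)]
  have hE : Real.exp (-G / gb) ≤ Real.exp (-(g t) / gb) := by gcongr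
  have hcS : 0 ≤ min β (k * gb / 2) * (V ^ 2 + X ^ 2) := by positivity
  nlinarith [mul_le_mul_of_nonneg_left (hbracket.trans (neg_le_neg hmin))
    (Real.exp_pos (-(g t) / gb)).le, mul_le_mul_of_nonneg_right hE hcS]

end Lyapunov

theorem exists_lyapunov_of_hasDerivAt {β : ℝ} (hβ : 0 < β) {g g' : ℝ → ℝ} {tb G M : ℝ}
    (hgtb : 0 < g tb) (hgG : ∀ t ≥ tb, g t ≤ G) (hg' : ∀ t ≥ tb, HasDerivAt g (g' t) t)
    (hg'0 : ∀ t ≥ tb, 0 ≤ g' t) (hg'M : ∀ t ≥ tb, g' t ≤ M) :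
    ∃ k > (0 : ℝ), ∃ k₁ > (0 : ℝ), ∃ k₂ > (0 : ℝ), ∃ k₃ > (0 : ℝ),
      ∀ t ≥ tb, ∀ V X : ℝ,
        (k₂ * (V ^ 2 + X ^ 2) ≤
            (V ^ 2 + k * X * V + g t * X ^ 2) * Real.exp (-(g t) / g tb) ∧
          (V ^ 2 + k * X * V + g t * X ^ 2) * Real.exp (-(g t) / g tb) ≤
            k₁ * (V ^ 2 + X ^ 2)) ∧
        deriv (fun s => (V ^ 2 + k * X * V + g s * X ^ 2) * Real.exp (-(g s) / g tb)) t
          + (deriv (fun v => (v ^ 2 + k * X * v + g t * X ^ 2) *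
              Real.exp (-(g t) / g tb)) V) * (-β * V - g t * X)
          + (deriv (fun x => (V ^ 2 + k * x * V + g t * x ^ 2) *
              Real.exp (-(g t) / g tb)) X) * V
          ≤ -k₃ * (V ^ 2 + X ^ 2) := by
  have hmono : MonotoneOn g (Ici tb) :=
    monotoneOn_of_hasDerivWithinAt_nonneg (convex_Ici tb)
      (fun t ht => (hg' t ht).continuousAt.continuousWithinAt)
      (fun t ht => (hg' t (interior_subset ht)).hasDerivWithinAt)
      (fun t ht => hg'0 t (interior_subset ht))
  have hG : 0 ≤ G := hgtb.le.trans (hgG tb le_rfl)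
  -- The first two bounds make `Q` positive definite, the third makes the orbital form
  -- negative definite.
  set k := min (min 1 (g tb)) (2 * g tb * β / (2 * g tb + (β + M / g tb) ^ 2))
  have hk : 0 < k := by positivity
  have hkβ : k * (2 * g tb + (β + M / g tb) ^ 2) ≤ 2 * g tb * β :=
    (le_div_iff₀ (by positivity)).1 (min_le_right _ _)
  refine ⟨k, hk, 1 + k + G, by positivity, min (1 / 2) (g tb / 2) * Real.exp (-G / g tb),
    by positivity, Real.exp (-G / g tb) * min β (k * g tb / 2), by positivity,
    fun t ht V X => ⟨?_, ?_⟩⟩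
  · have hgt : g tb ≤ g t := hmono self_mem_Ici ht ht
    exact lyapunov_bounds hk.le ((min_le_left _ _).trans (min_le_left _ _))
      ((min_le_left _ _).trans (min_le_right _ _)) hgtb hgt (hgG t ht)
  · exact lyapunov_orbital_derivative_le hβ.le (hg' t ht) (hg'0 t ht) (hg'M t ht) hk hgtb
      (hmono self_mem_Ici ht ht) (hgG t ht) hkβ

/-- **Lyapunov function (Theorem 5.1)** for the linearized planar system
`V̇ = -βV - g(t)X`, `Ẋ = V` of the alignment–chemotaxis model: the explicit
function `U(t,V,X) = (V² + kXV + g(t)X²)·e^{-g(t)/g(t̄)}` is, for a suitable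
constant `k > 0`, a Lyapunov function on `[t̄, ∞)`: it is equivalent to
`V² + X²` (with constants `k₁, k₂`) and its derivative along the flow is at most
`-k₃(V² + X²)`. -/
theorem lyapunov_function_exists
    (β γ ξ η D R : ℝ) (hβ : 0 < β) (hγ : 0 < γ) (hξ : 0 < ξ) (hη : 0 < η)
    (hD : 0 < D) (hR : 0 < R) (N : ℕ) (hN : 1 ≤ N)
    (Cb : ℝ → ℝ)
    (hCb : ∀ z > 0, Cb z =
      γ * ξ * R ^ 2 * Real.exp (-R ^ 2 / (4 * z * D) - η * z) / (8 * z ^ 2 * D ^ 2))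
    (g : ℝ → ℝ) (hg : ∀ t, g t = (N : ℝ) * ∫ z in (0 : ℝ)..t, Cb z)
    (tb : ℝ) (htb : 0 < tb) :
    ∃ k > (0 : ℝ), ∃ k₁ > (0 : ℝ), ∃ k₂ > (0 : ℝ), ∃ k₃ > (0 : ℝ),
      ∀ t ≥ tb, ∀ V X : ℝ,
        (k₂ * (V ^ 2 + X ^ 2) ≤
            (V ^ 2 + k * X * V + g t * X ^ 2) * Real.exp (-(g t) / g tb) ∧
          (V ^ 2 + k * X * V + g t * X ^ 2) * Real.exp (-(g t) / g tb) ≤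
            k₁ * (V ^ 2 + X ^ 2)) ∧
        deriv (fun s => (V ^ 2 + k * X * V + g s * X ^ 2) * Real.exp (-(g s) / g tb)) t
          + (deriv (fun v => (v ^ 2 + k * X * v + g t * X ^ 2) *
              Real.exp (-(g t) / g tb)) V) * (-β * V - g t * X)
          + (deriv (fun x => (V ^ 2 + k * x * V + g t * x ^ 2) *
              Real.exp (-(g t) / g tb)) X) * V
          ≤ -k₃ * (V ^ 2 + X ^ 2) := by
  have hCb' : EqOn Cb (chemotaxisKernel γ ξ η D R) (Ioi 0) := fun z hz => hCb z hz
  have hpos : ∀ z > 0, 0 < Cb z := fun z hz => by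
    rw [hCb' hz]; exact chemotaxisKernel_pos hγ hξ hD hR hz
  have hle : ∀ z > 0, Cb z ≤ 4 * γ * ξ / R ^ 2 * Real.exp (-η * z) := fun z hz => by
    rw [hCb' hz]; exact chemotaxisKernel_le hγ hξ hD hR hz
  have hbdd : ∀ z > 0, Cb z ≤ 4 * γ * ξ / R ^ 2 := fun z hz =>
    (hle z hz).trans (mul_le_of_le_one_right (by positivity)
      (Real.exp_le_one_iff.2 (by nlinarith)))
  have hcont : ContinuousOn Cb (Ioi 0) := (continuousOn_chemotaxisKernel hD).congr hCb'
  have hint : IntegrableOn Cb (Ioi 0) :=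
    integrableOn_Ioi_of_le_exp hη hcont (fun z hz => (hpos z hz).le) hle
  have hN0 : (0 : ℝ) < N := by exact_mod_cast hN
  obtain rfl : g = fun t => (N : ℝ) * ∫ z in (0 : ℝ)..t, Cb z := funext hg
  exact exists_lyapunov_of_hasDerivAt hβ (g' := fun t => N * Cb t)
    (G := N * ∫ z in Ioi 0, Cb z) (M := N * (4 * γ * ξ / R ^ 2))
    (mul_pos hN0 (integral_zero_pos hint hpos htb))
    (fun t ht => mul_le_mul_of_nonneg_left
      (integral_zero_le_integral_Ioi hint (fun z hz => (hpos z hz).le) (htb.le.trans ht)) hN0.le)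
    (fun t ht => (hasDerivAt_integral_zero hint hcont (htb.trans_le ht)).const_mul _)
    (fun t ht => mul_nonneg hN0.le (hpos t (htb.trans_le ht)).le)
    (fun t ht => mul_le_mul_of_nonneg_left (hbdd t (htb.trans_le ht)) hN0.le)
end

section
/- Let β, γ, ξ, η, D, R > 0, N ∈ ℕ with N ≥ 1, define C̄(z) = γξR² e^{-R²/(4zD) - ηz}/(8z²D²) for z > 0 and g(t) = N ∫₀^t C̄(z) dz. Fix t̄ > 0. Then there exist constants K ≥ 1 and λ > 0 such that every solution (V, X) : [t̄, ∞) → ℝ² of the system V̇(t) = -βV(t) - g(t)X(t), Ẋ(t) = V(t) satisfies ‖(V(t), X(t))‖ ≤ K·‖(V(t̄), X(t̄))‖·e^{-λ(t - t̄)} for all t ≥ t̄. In particular the equilibrium (V, X) = (0, 0) is globally uniformly asymptotically stable with exponential rate of convergence. -/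
open MeasureTheory Set Filter Real

/-!
Along a solution, the quadratic form `U = V² + k X V + g X²` with a small coupling `k > 0`
satisfies `U' ≤ -λ U + g' X²`, and it is comparable to `V² + X²` while `g` stays between
`g(t̄) > 0` and an upper bound `G`. As `g' ≥ 0` and `X² ≤ 2U / g(t̄)`, Grönwall's inequality
with the rate `2g'/g(t̄) - λ` gives `U(t) ≤ U(t̄) e^{2G/g(t̄)} e^{-λ(t - t̄)}`; this replaces the
exponential weight in the paper's Lyapunov function. For the chemotactic kernel `g' = N C̄ > 0`,
and `e^{-R²/(4zD)} ≤ 32 z²D²/R⁴` tames the singularity of `C̄` at `0`, so that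
`C̄(z) ≤ (4γξ/R²) e^{-ηz}` and `G = 4Nγξ/(R²η)`.
-/

theorem le_mul_exp_sub_of_hasDerivAt_le_mul {u u' r r' : ℝ → ℝ} {a t : ℝ}
    (hu : ∀ s ≥ a, HasDerivAt u (u' s) s) (hr : ∀ s ≥ a, HasDerivAt r (r' s) s)
    (hle : ∀ s ≥ a, u' s ≤ r' s * u s) (ht : a ≤ t) :
    u t ≤ u a * exp (r t - r a) := by
  have hderiv : ∀ s ≥ a, HasDerivAt (fun s => u s * exp (-r s))
      ((u' s - r' s * u s) * exp (-r s)) s := fun s hs =>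
    ((hu s hs).mul (hr s hs).neg.exp).congr_deriv (by simp only [Pi.neg_apply]; ring)
  have hanti : AntitoneOn (fun s => u s * exp (-r s)) (Ici a) := by
    refine antitoneOn_of_hasDerivWithinAt_nonpos (convex_Ici a)
      (fun s hs => (hderiv s hs).continuousAt.continuousWithinAt)
      (fun s hs => (hderiv s (interior_subset hs)).hasDerivWithinAt) fun s hs => ?_
    exact mul_nonpos_of_nonpos_of_nonneg (sub_nonpos.2 (hle s (interior_subset hs)))
      (exp_nonneg _)
  have h := hanti self_mem_Ici (mem_Ici.2 ht) ht
  calc u t = u t * exp (-r t) * exp (r t) := by rw [mul_assoc, ← exp_add]; simp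
    _ ≤ u a * exp (-r a) * exp (r t) := by gcongr
    _ = u a * exp (r t - r a) := by rw [mul_assoc, ← exp_add]; ring_nf

section Primitive

variable {f : ℝ → ℝ} {C η : ℝ}

theorem integrableOn_Ioi_of_le_mul_exp (hη : 0 < η) (hf : ContinuousOn f (Ioi 0))
    (hf₀ : ∀ z > 0, 0 ≤ f z) (hfC : ∀ z > 0, f z ≤ C * exp (-η * z)) :
    IntegrableOn f (Ioi 0) := by
  refine Integrable.mono' ((exp_neg_integrableOn_Ioi 0 hη).const_mul C)
    (hf.aestronglyMeasurable measurableSet_Ioi) ((ae_restrict_iff' measurableSet_Ioi).2 ?_)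
  refine Eventually.of_forall fun z hz => ?_
  rw [norm_of_nonneg (hf₀ z hz)]
  exact hfC z hz

theorem intervalIntegrable_of_le_mul_exp (hη : 0 < η) (hf : ContinuousOn f (Ioi 0))
    (hf₀ : ∀ z > 0, 0 ≤ f z) (hfC : ∀ z > 0, f z ≤ C * exp (-η * z)) {t : ℝ} (ht : 0 ≤ t) :
    IntervalIntegrable f volume 0 t :=
  (intervalIntegrable_iff_integrableOn_Ioc_of_le ht).2
    ((integrableOn_Ioi_of_le_mul_exp hη hf hf₀ hfC).mono_set Ioc_subset_Ioi_self)

theorem integral_le_div_of_le_mul_exp (hη : 0 < η) (hf : ContinuousOn f (Ioi 0))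
    (hf₀ : ∀ z > 0, 0 ≤ f z) (hfC : ∀ z > 0, f z ≤ C * exp (-η * z)) {t : ℝ} (ht : 0 ≤ t) :
    ∫ z in (0 : ℝ)..t, f z ≤ C / η := by
  have hint := integrableOn_Ioi_of_le_mul_exp hη hf hf₀ hfC
  calc ∫ z in (0 : ℝ)..t, f z = ∫ z in Ioc 0 t, f z := intervalIntegral.integral_of_le ht
    _ ≤ ∫ z in Ioi 0, f z :=
      setIntegral_mono_set hint ((ae_restrict_iff' measurableSet_Ioi).2
        (Eventually.of_forall hf₀)) Ioc_subset_Ioi_self.eventuallyLE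
    _ ≤ ∫ z in Ioi 0, C * exp (-η * z) :=
      setIntegral_mono_on hint ((exp_neg_integrableOn_Ioi 0 hη).const_mul C) measurableSet_Ioi hfC
    _ = C / η := by
      rw [integral_const_mul, integral_exp_mul_Ioi (neg_lt_zero.2 hη)]; field_simp; simp

theorem hasDerivAt_integral_of_le_mul_exp (hη : 0 < η) (hf : ContinuousOn f (Ioi 0))
    (hf₀ : ∀ z > 0, 0 ≤ f z) (hfC : ∀ z > 0, f z ≤ C * exp (-η * z)) {t : ℝ} (ht : 0 < t) :
    HasDerivAt (fun s => ∫ z in (0 : ℝ)..s, f z) (f t) t :=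
  intervalIntegral.integral_hasDerivAt_right (intervalIntegrable_of_le_mul_exp hη hf hf₀ hfC ht.le)
    (hf.stronglyMeasurableAtFilter isOpen_Ioi t ht) (hf.continuousAt (Ioi_mem_nhds ht))

theorem integral_pos_of_le_mul_exp (hη : 0 < η) (hf : ContinuousOn f (Ioi 0))
    (hf₀ : ∀ z > 0, 0 < f z) (hfC : ∀ z > 0, f z ≤ C * exp (-η * z)) {t : ℝ} (ht : 0 < t) :
    0 < ∫ z in (0 : ℝ)..t, f z :=
  intervalIntegral.intervalIntegral_pos_of_pos_on
    (intervalIntegrable_of_le_mul_exp hη hf (fun z hz => (hf₀ z hz).le) hfC ht.le)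
    (fun z hz => hf₀ z hz.1) ht

end Primitive

noncomputable def concentrationKernel (γ ξ η D R z : ℝ) : ℝ :=
  γ * ξ * R ^ 2 * exp (-R ^ 2 / (4 * z * D) - η * z) / (8 * z ^ 2 * D ^ 2)

section ConcentrationKernel

variable {γ ξ η D R : ℝ}

theorem continuousOn_concentrationKernel (hD : D ≠ 0) :
    ContinuousOn (concentrationKernel γ ξ η D R) (Ioi 0) := by
  unfold concentrationKernel
  fun_prop (disch := intro z (hz : 0 < z); positivity)

theorem concentrationKernel_pos (hγ : 0 < γ) (hξ : 0 < ξ) (hD : D ≠ 0) (hR : R ≠ 0) {z : ℝ}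
    (hz : 0 < z) : 0 < concentrationKernel γ ξ η D R z := by
  unfold concentrationKernel
  positivity

theorem concentrationKernel_le (hγ : 0 ≤ γ) (hξ : 0 ≤ ξ) (hD : 0 < D) (hR : R ≠ 0) {z : ℝ}
    (hz : 0 < z) : concentrationKernel γ ξ η D R z ≤ 4 * γ * ξ / R ^ 2 * exp (-η * z) := by
  set y := R ^ 2 / (4 * z * D)
  have hy : 0 < y := by positivity
  have hexp : exp (-y) ≤ 2 / y ^ 2 := by
    rw [exp_neg, ← inv_div]
    exact inv_anti₀ (by positivity) (by simpa using pow_div_factorial_le_exp _ hy.le 2)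
  unfold concentrationKernel
  rw [show -R ^ 2 / (4 * z * D) - η * z = -y + -η * z by ring, exp_add,
    div_le_iff₀ (by positivity)]
  calc γ * ξ * R ^ 2 * (exp (-y) * exp (-η * z))
      ≤ γ * ξ * R ^ 2 * (2 / y ^ 2 * exp (-η * z)) := by gcongr
    _ = 4 * γ * ξ / R ^ 2 * exp (-η * z) * (8 * z ^ 2 * D ^ 2) := by
      simp only [y]; field_simp; ring

end ConcentrationKernel

def lyapunovForm (k g v x : ℝ) : ℝ := v ^ 2 + k * x * v + g * x ^ 2

section LyapunovForm

variable {a b c k g β v x : ℝ}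

theorem lyapunovForm_ge (hk : k ^ 2 ≤ a) (hg : a ≤ g) :
    v ^ 2 / 2 + a / 2 * x ^ 2 ≤ lyapunovForm k g v x := by
  unfold lyapunovForm
  nlinarith [sq_nonneg (v + k * x), mul_nonneg (sub_nonneg.2 hg) (sq_nonneg x),
    mul_nonneg (sub_nonneg.2 hk) (sq_nonneg x)]

theorem min_mul_le_lyapunovForm (hk : k ^ 2 ≤ a) (hg : a ≤ g) :
    min (1 / 2) (a / 2) * (v ^ 2 + x ^ 2) ≤ lyapunovForm k g v x := by
  refine le_trans ?_ (lyapunovForm_ge hk hg)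
  nlinarith [min_le_left (1 / 2 : ℝ) (a / 2), min_le_right (1 / 2 : ℝ) (a / 2),
    sq_nonneg v, sq_nonneg x]

theorem lyapunovForm_le (hk : 0 ≤ k) (hg₀ : 0 ≤ g) (hg : g ≤ b) :
    lyapunovForm k g v x ≤ (1 + b + k) * (v ^ 2 + x ^ 2) := by
  unfold lyapunovForm
  nlinarith [mul_nonneg hk (sq_nonneg (v + x)), mul_nonneg hk (sq_nonneg (v - x)),
    mul_nonneg (sub_nonneg.2 hg) (sq_nonneg x), mul_nonneg (hg₀.trans hg) (sq_nonneg v),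
    sq_nonneg v, sq_nonneg x]

theorem lyapunovForm_dissipation_le (hβ : 0 ≤ β) (hk : 0 ≤ k) (hkβ : k ≤ β / 2) (hkβa : k * β ≤ a)
    (hg : a ≤ g) (hcβ : c ≤ β) (hca : c ≤ k * a / 2) :
    (k - 2 * β) * v ^ 2 - k * β * x * v - k * g * x ^ 2 ≤ -c * (v ^ 2 + x ^ 2) := by
  nlinarith [mul_nonneg hβ (sq_nonneg (v + k * x)), mul_nonneg hk (sub_nonneg.2 hg),
    mul_nonneg (sub_nonneg.2 hcβ) (sq_nonneg v), mul_nonneg (sub_nonneg.2 hca) (sq_nonneg x),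
    mul_nonneg (mul_nonneg hk (sub_nonneg.2 hkβa)) (sq_nonneg x),
    mul_nonneg (mul_nonneg hk (sub_nonneg.2 hg)) (sq_nonneg x)]

theorem hasDerivAt_lyapunovForm {V X g g' : ℝ → ℝ} {s : ℝ} (k β : ℝ)
    (hV : HasDerivAt V (-β * V s - g s * X s) s) (hX : HasDerivAt X (V s) s)
    (hg : HasDerivAt g (g' s) s) :
    HasDerivAt (fun s => lyapunovForm k (g s) (V s) (X s))
      ((k - 2 * β) * V s ^ 2 - k * β * X s * V s - k * g s * X s ^ 2 + g' s * X s ^ 2) s := by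
  unfold lyapunovForm
  exact (((hV.pow 2).add ((hX.const_mul k).mul hV)).add (hg.mul (hX.pow 2))).congr_deriv
    (by simp only [Nat.cast_ofNat, Pi.pow_apply]; ring)

theorem lyapunovForm_deriv_le {g' : ℝ} (ha : 0 < a) (hβ : 0 ≤ β) (hk : 0 ≤ k) (hkβ : k ≤ β / 2)
    (hkβa : k * β ≤ a) (hka : k ^ 2 ≤ a) (hg : a ≤ g) (hgb : g ≤ b) (hg' : 0 ≤ g')
    (hc : 0 ≤ c) (hcβ : c ≤ β) (hca : c ≤ k * a / 2) :
    (k - 2 * β) * v ^ 2 - k * β * x * v - k * g * x ^ 2 + g' * x ^ 2 ≤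
      (2 / a * g' - c / (1 + b + k)) * lyapunovForm k g v x := by
  have hQ := lyapunovForm_ge (v := v) (x := x) hka hg
  have hM : 0 < 1 + b + k := by linarith
  have hdecay : c / (1 + b + k) * lyapunovForm k g v x ≤ c * (v ^ 2 + x ^ 2) := by
    rw [div_mul_eq_mul_div, div_le_iff₀ hM, mul_assoc, mul_comm (v ^ 2 + x ^ 2)]
    exact mul_le_mul_of_nonneg_left (lyapunovForm_le hk (ha.le.trans hg) hgb) hc
  have hgrowth : g' * x ^ 2 ≤ 2 / a * g' * lyapunovForm k g v x := by
    rw [mul_comm (2 / a), mul_assoc]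
    refine mul_le_mul_of_nonneg_left ?_ hg'
    rw [div_mul_eq_mul_div, le_div_iff₀ ha]
    nlinarith [sq_nonneg v]
  linarith [lyapunovForm_dissipation_le (v := v) (x := x) hβ hk hkβ hkβa hg hcβ hca]

end LyapunovForm

noncomputable def dampingCoupling (β a : ℝ) : ℝ := min (β / 2) (a / β)

noncomputable def lyapunovRate (β a b : ℝ) : ℝ :=
  min β (dampingCoupling β a * a / 2) / (1 + b + dampingCoupling β a)

section DampedOscillator

variable {β a b : ℝ}

theorem dampingCoupling_pos (hβ : 0 < β) (ha : 0 < a) : 0 < dampingCoupling β a :=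
  lt_min (by positivity) (by positivity)

theorem dampingCoupling_le (β a : ℝ) : dampingCoupling β a ≤ β / 2 := min_le_left _ _

theorem dampingCoupling_mul_le (hβ : 0 < β) (a : ℝ) : dampingCoupling β a * β ≤ a :=
  (mul_le_mul_of_nonneg_right (min_le_right _ _) hβ.le).trans_eq (div_mul_cancel₀ a hβ.ne')

theorem dampingCoupling_sq_le (hβ : 0 < β) (ha : 0 < a) : dampingCoupling β a ^ 2 ≤ a := by
  have hk := dampingCoupling_pos hβ ha
  nlinarith [dampingCoupling_le β a, dampingCoupling_mul_le hβ a]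

theorem lyapunovRate_pos (hβ : 0 < β) (ha : 0 < a) (hb : 0 ≤ b) : 0 < lyapunovRate β a b := by
  have hk := dampingCoupling_pos hβ ha
  unfold lyapunovRate
  exact div_pos (lt_min hβ (by positivity)) (by positivity)

theorem lyapunovForm_le_mul_exp {g g' V X : ℝ → ℝ} {tb t : ℝ} (hβ : 0 < β) (ha : 0 < a)
    (hg : ∀ s ≥ tb, HasDerivAt g (g' s) s) (hg' : ∀ s ≥ tb, 0 ≤ g' s)
    (hgab : ∀ s ≥ tb, a ≤ g s ∧ g s ≤ b)
    (hV : ∀ s ≥ tb, HasDerivAt V (-β * V s - g s * X s) s)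
    (hX : ∀ s ≥ tb, HasDerivAt X (V s) s) (ht : tb ≤ t) :
    lyapunovForm (dampingCoupling β a) (g t) (V t) (X t) ≤
      lyapunovForm (dampingCoupling β a) (g tb) (V tb) (X tb) *
        exp (2 / a * (g t - g tb) - lyapunovRate β a b * (t - tb)) := by
  set k := dampingCoupling β a
  have hk := dampingCoupling_pos hβ ha
  have hdecay : ∀ s ≥ tb,
      (k - 2 * β) * V s ^ 2 - k * β * X s * V s - k * g s * X s ^ 2 + g' s * X s ^ 2 ≤
        (2 / a * g' s - lyapunovRate β a b) * lyapunovForm k (g s) (V s) (X s) :=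
    fun s hs => lyapunovForm_deriv_le ha hβ.le hk.le (dampingCoupling_le β a)
      (dampingCoupling_mul_le hβ a) (dampingCoupling_sq_le hβ ha) (hgab s hs).1 (hgab s hs).2
      (hg' s hs) (lt_min hβ (by positivity)).le (min_le_left _ _) (min_le_right _ _)
  calc _ ≤ _ := le_mul_exp_sub_of_hasDerivAt_le_mul
        (r := fun s => 2 / a * g s - lyapunovRate β a b * s)
        (fun s hs => hasDerivAt_lyapunovForm k β (hV s hs) (hX s hs) (hg s hs))
        (fun s hs => ((hg s hs).const_mul _).sub
          (((hasDerivAt_id' s).const_mul _).congr_deriv (mul_one _)))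
        hdecay ht
    _ = _ := by ring_nf

end DampedOscillator

theorem sqrt_le_mul_sqrt_mul_exp_of_le {s s₀ C lam d : ℝ} (hC : 0 ≤ C)
    (h : s ≤ C * s₀ * exp (-lam * d)) :
    √s ≤ √C * √s₀ * exp (-(lam / 2) * d) := by
  calc √s ≤ √(C * s₀ * exp (-lam * d)) := sqrt_le_sqrt h
    _ = √C * √s₀ * exp (-(lam / 2) * d) := by
      rw [sqrt_mul' _ (exp_nonneg _), sqrt_mul hC, ← exp_half]; ring_nf

theorem dampedOscillator_exponentiallyStable {β b tb : ℝ} {g g' : ℝ → ℝ} (hβ : 0 < β)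
    (hg : ∀ t ≥ tb, HasDerivAt g (g' t) t) (hg' : ∀ t ≥ tb, 0 ≤ g' t) (hg₀ : 0 < g tb)
    (hgb : ∀ t ≥ tb, g t ≤ b) :
    ∃ K : ℝ, 1 ≤ K ∧ ∃ lam > (0 : ℝ),
      ∀ V X : ℝ → ℝ,
        (∀ t ≥ tb, HasDerivAt V (-β * V t - g t * X t) t) →
        (∀ t ≥ tb, HasDerivAt X (V t) t) →
        ∀ t ≥ tb,
          √((V t) ^ 2 + (X t) ^ 2) ≤
            K * √((V tb) ^ 2 + (X tb) ^ 2) * exp (-lam * (t - tb)) := by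
  set a := g tb
  set k := dampingCoupling β a
  set m := min (1 / 2 : ℝ) (a / 2)
  set M := 1 + b + k
  set C := M * exp (2 * b / a) / m
  have hb : 0 ≤ b := hg₀.le.trans (hgb tb le_rfl)
  have hk : 0 < k := dampingCoupling_pos hβ hg₀
  have hm : 0 < m := lt_min (by norm_num) (by positivity)
  have hmono : MonotoneOn g (Ici tb) :=
    monotoneOn_of_hasDerivWithinAt_nonneg (convex_Ici tb)
      (fun s hs => (hg s hs).continuousAt.continuousWithinAt)
      (fun s hs => (hg s (interior_subset hs)).hasDerivWithinAt)
      (fun s hs => hg' s (interior_subset hs))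
  have hgab : ∀ s ≥ tb, a ≤ g s ∧ g s ≤ b := fun s hs =>
    ⟨hmono self_mem_Ici (mem_Ici.2 hs) hs, hgb s hs⟩
  refine ⟨max 1 √C, le_max_left _ _, lyapunovRate β a b / 2,
    half_pos (lyapunovRate_pos hβ hg₀ hb), fun V X hV hX t ht => ?_⟩
  have hlower : m * (V t ^ 2 + X t ^ 2) ≤ lyapunovForm k (g t) (V t) (X t) :=
    min_mul_le_lyapunovForm (dampingCoupling_sq_le hβ hg₀) (hgab t ht).1
  have hupper : lyapunovForm k a (V tb) (X tb) ≤ M * (V tb ^ 2 + X tb ^ 2) :=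
    lyapunovForm_le hk.le hg₀.le (hgb tb le_rfl)
  have hexp : exp (2 / a * (g t - a) - lyapunovRate β a b * (t - tb)) ≤
      exp (2 * b / a) * exp (-lyapunovRate β a b * (t - tb)) := by
    have hgrowth : 2 / a * (g t - a) ≤ 2 * b / a := by
      rw [div_mul_eq_mul_div]
      gcongr
      linarith [(hgab t ht).2]
    rw [← exp_add]
    gcongr
    linarith
  have hQ₀ : 0 ≤ lyapunovForm k a (V tb) (X tb) :=
    (by positivity : 0 ≤ m * (V tb ^ 2 + X tb ^ 2)).trans
      (min_mul_le_lyapunovForm (dampingCoupling_sq_le hβ hg₀) le_rfl)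
  have hsq : V t ^ 2 + X t ^ 2 ≤
      C * (V tb ^ 2 + X tb ^ 2) * exp (-lyapunovRate β a b * (t - tb)) := by
    have h : m * (V t ^ 2 + X t ^ 2) ≤
        M * (V tb ^ 2 + X tb ^ 2) * (exp (2 * b / a) * exp (-lyapunovRate β a b * (t - tb))) :=
      calc m * (V t ^ 2 + X t ^ 2) ≤ lyapunovForm k (g t) (V t) (X t) := hlower
        _ ≤ lyapunovForm k a (V tb) (X tb) *
            exp (2 / a * (g t - a) - lyapunovRate β a b * (t - tb)) :=
          lyapunovForm_le_mul_exp hβ hg₀ hg hg' hgab hV hX ht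
        _ ≤ _ := mul_le_mul hupper hexp (exp_nonneg _) (by positivity)
    calc V t ^ 2 + X t ^ 2 = m * (V t ^ 2 + X t ^ 2) / m := by field_simp
      _ ≤ M * (V tb ^ 2 + X tb ^ 2) *
          (exp (2 * b / a) * exp (-lyapunovRate β a b * (t - tb))) / m := by gcongr
      _ = _ := by simp only [C]; ring
  calc √(V t ^ 2 + X t ^ 2)
      ≤ √C * √(V tb ^ 2 + X tb ^ 2) * exp (-(lyapunovRate β a b / 2) * (t - tb)) :=
        sqrt_le_mul_sqrt_mul_exp_of_le (by positivity) hsq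
    _ ≤ max 1 √C * √(V tb ^ 2 + X tb ^ 2) * exp (-(lyapunovRate β a b / 2) * (t - tb)) := by
        gcongr; exact le_max_right _ _

/-- **Exponential stability (Theorem 5.2)** for the linearized planar system
`V̇ = -βV - g(t)X`, `Ẋ = V` governing the deviations from the centre of mass in the
linearized alignment–chemotaxis model: every solution decays exponentially to the
equilibrium `(0,0)`, uniformly from any initial time `t̄ > 0`. -/
theorem exponential_stability
    (β γ ξ η D R : ℝ) (hβ : 0 < β) (hγ : 0 < γ) (hξ : 0 < ξ) (hη : 0 < η)
    (hD : 0 < D) (hR : 0 < R) (N : ℕ) (hN : 1 ≤ N)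
    (Cb : ℝ → ℝ)
    (hCb : ∀ z > 0, Cb z =
      γ * ξ * R ^ 2 * Real.exp (-R ^ 2 / (4 * z * D) - η * z) / (8 * z ^ 2 * D ^ 2))
    (g : ℝ → ℝ) (hg : ∀ t, g t = (N : ℝ) * ∫ z in (0 : ℝ)..t, Cb z)
    (tb : ℝ) (htb : 0 < tb) :
    ∃ K : ℝ, 1 ≤ K ∧ ∃ lam > (0 : ℝ),
      ∀ V X : ℝ → ℝ,
        (∀ t ≥ tb, HasDerivAt V (-β * V t - g t * X t) t) →
        (∀ t ≥ tb, HasDerivAt X (V t) t) →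
        ∀ t ≥ tb,
          Real.sqrt ((V t) ^ 2 + (X t) ^ 2) ≤
            K * Real.sqrt ((V tb) ^ 2 + (X tb) ^ 2) * Real.exp (-lam * (t - tb)) := by
  have hCb' : EqOn Cb (concentrationKernel γ ξ η D R) (Ioi 0) := fun z hz => hCb z hz
  have hcont : ContinuousOn Cb (Ioi 0) := (continuousOn_concentrationKernel hD.ne').congr hCb'
  have hpos : ∀ z > 0, 0 < Cb z := fun z hz =>
    hCb' hz ▸ concentrationKernel_pos hγ hξ hD.ne' hR.ne' hz
  have hle : ∀ z > 0, Cb z ≤ 4 * γ * ξ / R ^ 2 * exp (-η * z) := fun z hz =>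
    hCb' hz ▸ concentrationKernel_le hγ.le hξ.le hD hR.ne' hz
  have hnonneg : ∀ z > 0, 0 ≤ Cb z := fun z hz => (hpos z hz).le
  have hN₀ : (0 : ℝ) < N := by exact_mod_cast hN
  have hg_eq : g = fun t => (N : ℝ) * ∫ z in (0 : ℝ)..t, Cb z := funext hg
  subst hg_eq
  refine dampedOscillator_exponentiallyStable hβ (g' := fun t => N * Cb t)
    (b := N * (4 * γ * ξ / R ^ 2 / η)) (fun t ht => ?_) (fun t ht => ?_) ?_ (fun t ht => ?_)
  · exact (hasDerivAt_integral_of_le_mul_exp hη hcont hnonneg hle (htb.trans_le ht)).const_mul _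
  · exact mul_nonneg hN₀.le (hnonneg t (htb.trans_le ht))
  · exact mul_pos hN₀ (integral_pos_of_le_mul_exp hη hcont hpos hle htb)
  · exact mul_le_mul_of_nonneg_left
      (integral_le_div_of_le_mul_exp hη hcont hnonneg hle (htb.le.trans ht)) hN₀.le
end

section
/- Let γ, ξ, η, D, R > 0, N ∈ ℕ with N ≥ 1, and define C̄(z) = γξR² e^{-R²/(4zD) - ηz}/(8z²D²) for z > 0 (so that 0 < N·C̄(z) ≤ ν for some constant ν > 0). Consider the scalar integro-differential equation V'(t) = -N ∫₀^t C̄(t-τ) (∫_τ^t V(s) ds) dτ for C¹ functions V : [0,∞) → ℝ. If V₁ and V₂ are two solutions of this equation on [0,∞) with V₁(0) = V₂(0), then V₁(t) = V₂(t) for all t ≥ 0. In particular, the only solution with zero initial datum is the identically zero solution. -/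
/-!
Since the equation is linear, the difference `W` of two solutions solves it with `W 0 = 0`.
The kernel is bounded by `ν = 4|γξ|/R²` (because `e^{-x} ≤ 2/x²`), so on `[0, t]` the
right-hand side is at most `N ν t ∫₀ᵗ |W|` in absolute value, and the mean value inequality
gives `|W t| ≤ N ν t² ∫₀ᵗ |W|`. Grönwall's inequality for `t ↦ ∫₀ᵗ |W|` then forces
`W = 0`.
-/

open MeasureTheory Set intervalIntegral

noncomputable def memoryTerm (K V : ℝ → ℝ) (t : ℝ) : ℝ :=
  ∫ τ in (0 : ℝ)..t, K (t - τ) * ∫ s in τ..t, V s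

noncomputable def centerOfMassKernel (γ ξ η D R z : ℝ) : ℝ :=
  γ * ξ * R ^ 2 * Real.exp (-R ^ 2 / (4 * z * D) - η * z) / (8 * z ^ 2 * D ^ 2)

theorem exp_neg_le_two_div_sq {x : ℝ} (hx : 0 < x) : Real.exp (-x) ≤ 2 / x ^ 2 := by
  have h := Real.pow_div_factorial_le_exp x hx.le 2
  rw [Real.exp_neg, inv_eq_one_div, div_le_div_iff₀ (Real.exp_pos x) (by positivity)]
  norm_num at h
  linarith

theorem abs_centerOfMassKernel_le (γ ξ : ℝ) {η D R z : ℝ} (hη : 0 ≤ η) (hD : 0 < D)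
    (hR : 0 < R) (hz : 0 < z) :
    |centerOfMassKernel γ ξ η D R z| ≤ 4 * |γ * ξ| / R ^ 2 := by
  set x := R ^ 2 / (4 * z * D) with hx_def
  have hx : 0 < x := by positivity
  have hexp : Real.exp (-R ^ 2 / (4 * z * D) - η * z) ≤ 2 / x ^ 2 :=
    calc Real.exp (-R ^ 2 / (4 * z * D) - η * z) ≤ Real.exp (-x) :=
          Real.exp_le_exp.2 (by rw [neg_div]; nlinarith [mul_nonneg hη hz.le])
      _ ≤ 2 / x ^ 2 := exp_neg_le_two_div_sq hx
  rw [centerOfMassKernel, abs_div, abs_mul, abs_mul _ (R ^ 2), abs_of_pos (Real.exp_pos _),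
    abs_of_pos (by positivity : (0 : ℝ) < 8 * z ^ 2 * D ^ 2),
    abs_of_pos (by positivity : 0 < R ^ 2)]
  calc |γ * ξ| * R ^ 2 * Real.exp (-R ^ 2 / (4 * z * D) - η * z) / (8 * z ^ 2 * D ^ 2)
      ≤ |γ * ξ| * R ^ 2 * (2 / x ^ 2) / (8 * z ^ 2 * D ^ 2) := by gcongr
    _ = 4 * |γ * ξ| / R ^ 2 := by rw [hx_def]; field_simp; ring

theorem continuousOn_centerOfMassKernel (γ ξ η : ℝ) {D : ℝ} (hD : D ≠ 0) (R : ℝ) :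
    ContinuousOn (centerOfMassKernel γ ξ η D R) (Ioi 0) := by
  unfold centerOfMassKernel
  fun_prop (disch := intro z hz; simp_all [ne_of_gt])

theorem intervalIntegrable_of_continuousOn_Ioi_of_abs_le {K : ℝ → ℝ} {ν t : ℝ}
    (hK : ContinuousOn K (Ioi 0)) (hν : ∀ z > 0, |K z| ≤ ν) (ht : 0 ≤ t) :
    IntervalIntegrable K volume 0 t := by
  rw [intervalIntegrable_iff_integrableOn_Ioc_of_le ht]
  exact IntegrableOn.of_bound measure_Ioc_lt_top
    ((hK.mono Ioc_subset_Ioi_self).aestronglyMeasurable measurableSet_Ioc) ν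
    ((ae_restrict_iff' measurableSet_Ioc).2 (ae_of_all _ fun z hz => hν z hz.1))

section MemoryTerm

variable {K : ℝ → ℝ} {t : ℝ}

theorem intervalIntegrable_memoryTerm_integrand (hK : IntervalIntegrable K volume 0 t)
    {V : ℝ → ℝ} (hV : IntervalIntegrable V volume 0 t) :
    IntervalIntegrable (fun τ => K (t - τ) * ∫ s in τ..t, V s) volume 0 t := by
  have hshift : IntervalIntegrable (fun τ => K (t - τ)) volume 0 t := by
    simpa using (hK.comp_sub_left t).symm
  exact hshift.mul_continuousOn
    (continuousOn_primitive_interval_left ((intervalIntegrable_iff').1 hV))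

theorem memoryTerm_sub (hK : IntervalIntegrable K volume 0 t) {V₁ V₂ : ℝ → ℝ}
    (h₁ : IntervalIntegrable V₁ volume 0 t) (h₂ : IntervalIntegrable V₂ volume 0 t) :
    memoryTerm K (V₁ - V₂) t = memoryTerm K V₁ t - memoryTerm K V₂ t := by
  rw [memoryTerm, memoryTerm, memoryTerm,
    ← integral_sub (intervalIntegrable_memoryTerm_integrand hK h₁)
      (intervalIntegrable_memoryTerm_integrand hK h₂)]
  refine integral_congr fun τ hτ => ?_
  have hsub : uIcc τ t ⊆ uIcc 0 t := uIcc_subset_uIcc hτ right_mem_uIcc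
  simp only [Pi.sub_apply, ← mul_sub]
  rw [integral_sub (h₁.mono_set hsub) (h₂.mono_set hsub)]

theorem abs_memoryTerm_le {ν : ℝ} (hK : ∀ z > 0, |K z| ≤ ν) {W : ℝ → ℝ}
    (hW : IntervalIntegrable W volume 0 t) (ht : 0 ≤ t) :
    |memoryTerm K W t| ≤ ν * (∫ s in (0 : ℝ)..t, |W s|) * t := by
  have hν : 0 ≤ ν := (abs_nonneg _).trans (hK 1 one_pos)
  have hW_nonneg : 0 ≤ ∫ s in (0 : ℝ)..t, |W s| := integral_nonneg ht fun _ _ => abs_nonneg _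
  have hinner : ∀ τ ∈ Icc 0 t, |∫ s in τ..t, W s| ≤ ∫ s in (0 : ℝ)..t, |W s| :=
    fun τ hτ => (abs_integral_le_integral_abs hτ.2).trans
      (integral_mono_interval hτ.1 hτ.2 le_rfl (ae_of_all _ fun _ => abs_nonneg _) hW.abs)
  have h := norm_integral_le_of_norm_le_const (a := 0) (b := t)
    (f := fun τ => K (t - τ) * ∫ s in τ..t, W s) (C := ν * ∫ s in (0 : ℝ)..t, |W s|) ?_
  · simpa [memoryTerm, abs_of_nonneg ht] using h
  intro τ hτ
  rw [uIoc_of_le ht] at hτ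
  rw [Real.norm_eq_abs, abs_mul]
  rcases hτ.2.eq_or_lt with rfl | hlt
  · simp only [integral_same, abs_zero, mul_zero]
    exact mul_nonneg hν hW_nonneg
  · exact mul_le_mul (hK _ (sub_pos.2 hlt)) (hinner τ (Ioc_subset_Icc_self hτ))
      (abs_nonneg _) hν

end MemoryTerm

theorem eqOn_zero_of_abs_le_mul_integral_abs {W : ℝ → ℝ} {L T : ℝ}
    (hW : ContinuousOn W (Icc 0 T))
    (hbound : ∀ t ∈ Icc 0 T, |W t| ≤ L * ∫ s in (0 : ℝ)..t, |W s|) :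
    ∀ t ∈ Icc 0 T, W t = 0 := by
  intro t ht
  have hT : 0 ≤ T := ht.1.trans ht.2
  set g : ℝ → ℝ := fun u => ∫ s in (0 : ℝ)..u, |W s|
  have hg_cont : ContinuousOn g (Icc 0 T) := by
    simpa [uIcc_of_le hT] using
      continuousOn_primitive_interval (a := (0 : ℝ)) (b := T) (μ := volume)
        (by simpa [uIcc_of_le hT] using hW.abs.integrableOn_Icc)
  have hg_deriv : ∀ x ∈ Ico 0 T, HasDerivWithinAt g |W x| (Ici x) x := by
    intro x hx
    have hnhds : Icc x T ∈ nhdsWithin x (Ioi x) := Icc_mem_nhdsGT hx.2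
    have hWx : ContinuousOn (fun s => |W s|) (Icc x T) := hW.abs.mono (Icc_subset_Icc_left hx.1)
    exact integral_hasDerivWithinAt_right
      (hW.abs.mono (by rw [uIcc_of_le hx.1]; exact Icc_subset_Icc_right hx.2.le)).intervalIntegrable
      ⟨Icc x T, hnhds, hWx.aestronglyMeasurable measurableSet_Icc⟩
      ((hWx x ⟨le_rfl, hx.2.le⟩).mono_of_mem_nhdsWithin hnhds)
  have hg_nonneg : ∀ x ∈ Icc 0 T, 0 ≤ g x := fun x hx =>
    integral_nonneg hx.1 fun _ _ => abs_nonneg _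
  have hg := norm_le_gronwallBound_of_norm_deriv_right_le (δ := 0) (K := L) (ε := 0)
    hg_cont hg_deriv (by simp [g]) fun x hx => by
      rw [Real.norm_eq_abs, abs_abs, Real.norm_eq_abs,
        abs_of_nonneg (hg_nonneg x (Ico_subset_Icc_self hx)), add_zero]
      exact hbound x (Ico_subset_Icc_self hx)
  have hgt : g t = 0 := abs_nonpos_iff.1 (by simpa [gronwallBound_ε0_δ0] using hg t ht)
  simpa [g, hgt] using hbound t ht

section Uniqueness

variable {K W : ℝ → ℝ} {ν c : ℝ}

theorem abs_le_of_hasDerivAt_memoryTerm (hK : ∀ z > 0, |K z| ≤ ν)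
    (hW : ∀ t ≥ 0, HasDerivAt W (c * memoryTerm K W t) t) (hW0 : W 0 = 0) {t : ℝ}
    (ht : 0 ≤ t) :
    |W t| ≤ |c| * ν * t ^ 2 * ∫ s in (0 : ℝ)..t, |W s| := by
  have hν : 0 ≤ ν := (abs_nonneg _).trans (hK 1 one_pos)
  have hWi : ∀ x ∈ Icc 0 t, IntervalIntegrable W volume 0 x := fun x hx =>
    ContinuousOn.intervalIntegrable_of_Icc hx.1 fun y hy =>
      (hW y hy.1).continuousAt.continuousWithinAt
  have hderiv : ∀ x ∈ Ico 0 t,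
      ‖c * memoryTerm K W x‖ ≤ |c| * ν * (∫ s in (0 : ℝ)..t, |W s|) * t := by
    intro x hx
    have hgx : ∫ s in (0 : ℝ)..x, |W s| ≤ ∫ s in (0 : ℝ)..t, |W s| :=
      integral_mono_interval le_rfl hx.1 hx.2.le (ae_of_all _ fun _ => abs_nonneg _)
        (hWi t ⟨ht, le_rfl⟩).abs
    have hgx_nonneg : 0 ≤ ∫ s in (0 : ℝ)..x, |W s| :=
      integral_nonneg hx.1 fun _ _ => abs_nonneg _
    rw [Real.norm_eq_abs, abs_mul, mul_assoc |c|, mul_assoc |c|]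
    gcongr
    calc |memoryTerm K W x| ≤ ν * (∫ s in (0 : ℝ)..x, |W s|) * x :=
          abs_memoryTerm_le hK (hWi x (Ico_subset_Icc_self hx)) hx.1
      _ ≤ ν * (∫ s in (0 : ℝ)..t, |W s|) * t :=
          mul_le_mul (by gcongr) hx.2.le hx.1 (mul_nonneg hν (hgx_nonneg.trans hgx))
  have h := norm_image_sub_le_of_norm_deriv_le_segment'
    (fun x hx => (hW x hx.1).hasDerivWithinAt) hderiv t (right_mem_Icc.2 ht)
  rw [hW0, sub_zero, Real.norm_eq_abs] at h
  linarith

theorem eq_zero_of_hasDerivAt_memoryTerm (hK : ∀ z > 0, |K z| ≤ ν)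
    (hW : ∀ t ≥ 0, HasDerivAt W (c * memoryTerm K W t) t) (hW0 : W 0 = 0) {T : ℝ}
    (hT : 0 ≤ T) : W T = 0 := by
  have hν : 0 ≤ ν := (abs_nonneg _).trans (hK 1 one_pos)
  refine eqOn_zero_of_abs_le_mul_integral_abs (L := |c| * ν * T ^ 2)
    (fun x hx => (hW x hx.1).continuousAt.continuousWithinAt) (fun t ht => ?_) T ⟨hT, le_rfl⟩
  have hg : 0 ≤ ∫ s in (0 : ℝ)..t, |W s| := integral_nonneg ht.1 fun _ _ => abs_nonneg _
  calc |W t| ≤ |c| * ν * t ^ 2 * ∫ s in (0 : ℝ)..t, |W s| :=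
        abs_le_of_hasDerivAt_memoryTerm hK hW hW0 ht.1
    _ ≤ |c| * ν * T ^ 2 * ∫ s in (0 : ℝ)..t, |W s| := by gcongr; exacts [ht.1, ht.2]

end Uniqueness

theorem center_of_mass_uniqueness_general
    (γ ξ η D R : ℝ) (hη : 0 < η) (hD : 0 < D) (hR : 0 < R)
    (N : ℕ)
    (Cb : ℝ → ℝ)
    (hCb : ∀ z > 0, Cb z =
      γ * ξ * R ^ 2 * Real.exp (-R ^ 2 / (4 * z * D) - η * z) / (8 * z ^ 2 * D ^ 2))
    (V₁ V₂ : ℝ → ℝ)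
    (hV₁ : ∀ t ≥ (0 : ℝ), HasDerivAt V₁
      (-(N : ℝ) * ∫ τ in (0 : ℝ)..t, Cb (t - τ) * ∫ s in τ..t, V₁ s) t)
    (hV₂ : ∀ t ≥ (0 : ℝ), HasDerivAt V₂
      (-(N : ℝ) * ∫ τ in (0 : ℝ)..t, Cb (t - τ) * ∫ s in τ..t, V₂ s) t)
    (h0 : V₁ 0 = V₂ 0) :
    ∀ t ≥ (0 : ℝ), V₁ t = V₂ t := by
  have hbound : ∀ z > 0, |Cb z| ≤ 4 * |γ * ξ| / R ^ 2 := fun z hz =>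
    hCb z hz ▸ abs_centerOfMassKernel_le γ ξ hη.le hD hR hz
  have hcont : ContinuousOn Cb (Ioi 0) :=
    (continuousOn_centerOfMassKernel γ ξ η hD.ne' R).congr hCb
  have hint : ∀ V : ℝ → ℝ, (∀ t ≥ 0, HasDerivAt V (-N * memoryTerm Cb V t) t) →
      ∀ t ≥ 0, IntervalIntegrable V volume 0 t := fun V hV t ht =>
    ContinuousOn.intervalIntegrable_of_Icc ht fun x hx =>
      (hV x hx.1).continuousAt.continuousWithinAt
  have hW : ∀ t ≥ 0, HasDerivAt (V₁ - V₂) (-N * memoryTerm Cb (V₁ - V₂) t) t := by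
    intro t ht
    rw [memoryTerm_sub (intervalIntegrable_of_continuousOn_Ioi_of_abs_le hcont hbound ht)
      (hint V₁ hV₁ t ht) (hint V₂ hV₂ t ht), mul_sub]
    exact (hV₁ t ht).sub (hV₂ t ht)
  intro t ht
  exact sub_eq_zero.1 (eq_zero_of_hasDerivAt_memoryTerm hbound hW (sub_eq_zero.2 h0) ht)

/-- **Uniqueness (Theorem 5.3)** for the centre-of-mass equation
`V'(t) = -N ∫₀ᵗ C̄(t-τ) (∫_τ^t V(s) ds) dτ` of the linearized alignment–chemotaxis
model: two C¹ solutions with the same initial datum coincide; in particular the only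
solution with zero initial datum is the identically zero solution. -/
theorem center_of_mass_uniqueness
    (γ ξ η D R : ℝ) (hγ : 0 < γ) (hξ : 0 < ξ) (hη : 0 < η) (hD : 0 < D) (hR : 0 < R)
    (N : ℕ) (hN : 1 ≤ N)
    (Cb : ℝ → ℝ)
    (hCb : ∀ z > 0, Cb z =
      γ * ξ * R ^ 2 * Real.exp (-R ^ 2 / (4 * z * D) - η * z) / (8 * z ^ 2 * D ^ 2))
    (V₁ V₂ : ℝ → ℝ)
    (hV₁ : ∀ t ≥ (0 : ℝ), HasDerivAt V₁
      (-(N : ℝ) * ∫ τ in (0 : ℝ)..t, Cb (t - τ) * ∫ s in τ..t, V₁ s) t)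
    (hV₂ : ∀ t ≥ (0 : ℝ), HasDerivAt V₂
      (-(N : ℝ) * ∫ τ in (0 : ℝ)..t, Cb (t - τ) * ∫ s in τ..t, V₂ s) t)
    (h0 : V₁ 0 = V₂ 0) :
    ∀ t ≥ (0 : ℝ), V₁ t = V₂ t :=
  center_of_mass_uniqueness_general γ ξ η D R hη hD hR N Cb hCb V₁ V₂ hV₁ hV₂ h0
end

section
/- Let D, R > 0 and N ∈ ℕ with N ≥ 1. Define F : (0,∞) × ℝ × ℝ → ℝ by F(h, a, b) = ∫_{-R}^{R} e^{-(a - x)²/(4hD)} · ( e^{-(b - √(R² - x²))²/(4hD)} - e^{-(b + √(R² - x²))²/(4hD)} ) dx. Then there exists a constant L > 0, depending only on D and R, such that for all h > 0 and all a, a', b, b' ∈ ℝ: |F(h, a, b) - F(h, a', b')| ≤ L·(|a - a'| + |b - b'|). -/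
/-!
With `c = 4hD`, the map `t ↦ exp (-t²/(2c))` is `1/√c`-Lipschitz, since its derivative has size
`|u| e^{-u²/2} / √c` with `u = t/√c` and `|u| e^{-u²/2} ≤ 1`. Factoring
`exp (-u²/c) - exp (-v²/c)` as a difference of squares of such terms bounds it by
`|u - v| / √c` times Gaussians of variance `c` centred at `u` and `v`. Hence the difference of
the two integrands is at most `4 (|a - a'| + |b - b'|) / √c` times Gaussians in `x` centred
at `a` and `a'`, whatever the value of `√(R² - x²)`. Integrating them over all of `ℝ` gives a
factor `√(2πc)`, which cancels the `1/√c` and leaves the constant `4√(2π)`, uniform in `h`.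
-/

open MeasureTheory Real

theorem abs_mul_exp_neg_sq_half_le_one (t : ℝ) : |t| * exp (-t ^ 2 / 2) ≤ 1 := by
  have h : |t| ≤ exp (t ^ 2 / 2) := by
    nlinarith [add_one_le_exp (t ^ 2 / 2), sq_nonneg (|t| - 1), sq_abs t]
  rwa [neg_div, exp_neg, ← div_eq_mul_inv, div_le_one (exp_pos _)]

theorem hasDerivAt_exp_neg_sq_half (t : ℝ) :
    HasDerivAt (fun t : ℝ ↦ exp (-t ^ 2 / 2)) (-t * exp (-t ^ 2 / 2)) t := by
  convert ((hasDerivAt_pow 2 t).const_mul (-1 / 2 : ℝ)).exp using 1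
  · ext x; ring_nf
  · push_cast; ring_nf

theorem abs_exp_neg_sq_half_sub_le (s r : ℝ) :
    |exp (-s ^ 2 / 2) - exp (-r ^ 2 / 2)| ≤ |s - r| := by
  have := convex_univ.norm_image_sub_le_of_norm_deriv_le (𝕜 := ℝ)
    (fun t _ ↦ (hasDerivAt_exp_neg_sq_half t).differentiableAt)
    (fun t _ ↦ by
      rw [(hasDerivAt_exp_neg_sq_half t).deriv, norm_mul, norm_neg, Real.norm_eq_abs,
        Real.norm_of_nonneg (exp_pos _).le]
      exact abs_mul_exp_neg_sq_half_le_one t) (Set.mem_univ r) (Set.mem_univ s)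
  simpa only [one_mul, Real.norm_eq_abs] using this

theorem exp_neg_sq_div_eq_sq (c t : ℝ) : exp (-t ^ 2 / c) = exp (-t ^ 2 / (2 * c)) ^ 2 := by
  rw [← exp_nat_mul]; ring_nf

section

variable {c : ℝ}

theorem exp_neg_sq_div_two_mul_le_one (hc : 0 ≤ c) (t : ℝ) : exp (-t ^ 2 / (2 * c)) ≤ 1 :=
  exp_le_one_iff.2 (div_nonpos_of_nonpos_of_nonneg (by nlinarith) (by positivity))

theorem exp_neg_sq_div_le_exp_neg_sq_div_two_mul (hc : 0 ≤ c) (t : ℝ) :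
    exp (-t ^ 2 / c) ≤ exp (-t ^ 2 / (2 * c)) := by
  rw [exp_neg_sq_div_eq_sq]
  exact pow_le_of_le_one (exp_pos _).le (exp_neg_sq_div_two_mul_le_one hc t) two_ne_zero

theorem abs_exp_neg_sq_div_two_mul_sub_le (hc : 0 < c) (u v : ℝ) :
    |exp (-u ^ 2 / (2 * c)) - exp (-v ^ 2 / (2 * c))| ≤ |u - v| / √c := by
  have hscale (t : ℝ) : -t ^ 2 / (2 * c) = -(t / √c) ^ 2 / 2 := by
    rw [div_pow, sq_sqrt hc.le]; ring
  calc |exp (-u ^ 2 / (2 * c)) - exp (-v ^ 2 / (2 * c))|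
      ≤ |u / √c - v / √c| := by
        rw [hscale u, hscale v]; exact abs_exp_neg_sq_half_sub_le _ _
    _ = |u - v| / √c := by rw [← sub_div, abs_div, abs_of_pos (sqrt_pos.2 hc)]

theorem abs_exp_neg_sq_div_sub_le (hc : 0 < c) (u v : ℝ) :
    |exp (-u ^ 2 / c) - exp (-v ^ 2 / c)| ≤
      |u - v| / √c * (exp (-u ^ 2 / (2 * c)) + exp (-v ^ 2 / (2 * c))) := by
  rw [exp_neg_sq_div_eq_sq c u, exp_neg_sq_div_eq_sq c v, sq_sub_sq, abs_mul,
    abs_of_pos (by positivity), mul_comm]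
  exact mul_le_mul_of_nonneg_right (abs_exp_neg_sq_div_two_mul_sub_le hc u v) (by positivity)

theorem abs_exp_neg_sq_div_sub_le_two_mul (hc : 0 < c) (u v : ℝ) :
    |exp (-u ^ 2 / c) - exp (-v ^ 2 / c)| ≤ 2 * |u - v| / √c := by
  calc |exp (-u ^ 2 / c) - exp (-v ^ 2 / c)|
      ≤ |u - v| / √c * (exp (-u ^ 2 / (2 * c)) + exp (-v ^ 2 / (2 * c))) :=
        abs_exp_neg_sq_div_sub_le hc u v
    _ ≤ |u - v| / √c * (1 + 1) := by
        gcongr <;> exact exp_neg_sq_div_two_mul_le_one hc.le _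
    _ = 2 * |u - v| / √c := by ring

theorem abs_exp_neg_sq_div_mul_sub_le (hc : 0 < c) (p p' q q' s : ℝ) :
    |exp (-p ^ 2 / c) * (exp (-(q - s) ^ 2 / c) - exp (-(q + s) ^ 2 / c)) -
        exp (-p' ^ 2 / c) * (exp (-(q' - s) ^ 2 / c) - exp (-(q' + s) ^ 2 / c))| ≤
      |p - p'| / √c * (exp (-p ^ 2 / (2 * c)) + exp (-p' ^ 2 / (2 * c))) +
        4 * |q - q'| / √c * exp (-p' ^ 2 / (2 * c)) := by
  set g : ℝ → ℝ := fun t ↦ exp (-t ^ 2 / c)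
  have hg (t : ℝ) : 0 ≤ g t ∧ g t ≤ 1 :=
    ⟨(exp_pos _).le, (exp_neg_sq_div_le_exp_neg_sq_div_two_mul hc.le t).trans
      (exp_neg_sq_div_two_mul_le_one hc.le t)⟩
  have hb : |g (q - s) - g (q + s)| ≤ 1 :=
    abs_sub_le_of_nonneg_of_le (hg _).1 (hg _).2 (hg _).1 (hg _).2
  have hminus := abs_exp_neg_sq_div_sub_le_two_mul hc (q - s) (q' - s)
  have hplus := abs_exp_neg_sq_div_sub_le_two_mul hc (q' + s) (q + s)
  rw [show q - s - (q' - s) = q - q' by ring] at hminus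
  rw [show q' + s - (q + s) = -(q - q') by ring, abs_neg] at hplus
  calc |g p * (g (q - s) - g (q + s)) - g p' * (g (q' - s) - g (q' + s))|
      = |(g p - g p') * (g (q - s) - g (q + s)) +
          g p' * ((g (q - s) - g (q' - s)) + (g (q' + s) - g (q + s)))| := by ring_nf
    _ ≤ |g p - g p'| * |g (q - s) - g (q + s)| +
          g p' * (|g (q - s) - g (q' - s)| + |g (q' + s) - g (q + s)|) := by
        grw [abs_add_le, abs_mul, abs_mul, abs_of_nonneg (hg p').1, abs_add_le]
    _ ≤ |p - p'| / √c * (exp (-p ^ 2 / (2 * c)) + exp (-p' ^ 2 / (2 * c))) * 1 +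
          exp (-p' ^ 2 / (2 * c)) * (2 * |q - q'| / √c + 2 * |q - q'| / √c) := by
        gcongr
        · exact abs_exp_neg_sq_div_sub_le hc p p'
        · exact exp_neg_sq_div_le_exp_neg_sq_div_two_mul hc.le p'
    _ = _ := by ring

end

theorem integrable_exp_neg_sub_sq_div {k : ℝ} (hk : 0 < k) (p : ℝ) :
    Integrable fun x : ℝ ↦ exp (-(p - x) ^ 2 / k) := by
  have h := (integrable_exp_neg_mul_sq (inv_pos.2 hk)).comp_sub_right p
  convert h using 2 with x
  ring_nf

theorem integral_exp_neg_sub_sq_div (k p : ℝ) :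
    ∫ x : ℝ, exp (-(p - x) ^ 2 / k) = √(π * k) := by
  have h := integral_sub_right_eq_self (μ := volume) (fun x : ℝ ↦ exp (-k⁻¹ * x ^ 2)) p
  rw [integral_gaussian, div_inv_eq_mul] at h
  convert h using 3 with x
  ring_nf

theorem norm_intervalIntegral_le_integral_of_norm_le {E : Type*} [NormedAddCommGroup E]
    [NormedSpace ℝ E] {μ : Measure ℝ} {f : ℝ → E} {φ : ℝ → ℝ} (hφ : Integrable φ μ)
    (hfφ : ∀ x, ‖f x‖ ≤ φ x) (α β : ℝ) :
    ‖∫ x in α..β, f x ∂μ‖ ≤ ∫ x, φ x ∂μ :=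
  calc ‖∫ x in α..β, f x ∂μ‖ ≤ ∫ x in Set.uIoc α β, ‖f x‖ ∂μ :=
        intervalIntegral.norm_integral_le_integral_norm_uIoc
    _ ≤ ∫ x in Set.uIoc α β, φ x ∂μ :=
        integral_mono_of_nonneg (.of_forall fun _ ↦ norm_nonneg _) hφ.integrableOn
          (.of_forall hfφ)
    _ ≤ ∫ x, φ x ∂μ :=
        setIntegral_le_integral hφ (.of_forall fun x ↦ (norm_nonneg _).trans (hfφ x))

theorem abs_intervalIntegral_exp_neg_sq_div_mul_sub_le {c : ℝ} (hc : 0 < c) {s : ℝ → ℝ}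
    (hs : Continuous s) (α β a a' b b' : ℝ) :
    |(∫ x in α..β, exp (-(a - x) ^ 2 / c) *
          (exp (-(b - s x) ^ 2 / c) - exp (-(b + s x) ^ 2 / c))) -
        ∫ x in α..β, exp (-(a' - x) ^ 2 / c) *
          (exp (-(b' - s x) ^ 2 / c) - exp (-(b' + s x) ^ 2 / c))| ≤
      4 * √(2 * π) * (|a - a'| + |b - b'|) := by
  have hint (p q : ℝ) : IntervalIntegrable (fun x ↦ exp (-(p - x) ^ 2 / c) *
      (exp (-(q - s x) ^ 2 / c) - exp (-(q + s x) ^ 2 / c))) volume α β :=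
    (by fun_prop : Continuous _).intervalIntegrable _ _
  have hG := integrable_exp_neg_sub_sq_div (by positivity : 0 < 2 * c)
  set φ : ℝ → ℝ := fun x ↦ |a - a'| / √c * (exp (-(a - x) ^ 2 / (2 * c)) +
    exp (-(a' - x) ^ 2 / (2 * c))) + 4 * |b - b'| / √c * exp (-(a' - x) ^ 2 / (2 * c))
  have hφint : Integrable φ := by fun_prop
  have hsqrt : √(π * (2 * c)) = √(2 * π) * √c := by
    rw [← sqrt_mul (by positivity)]; ring_nf
  rw [← intervalIntegral.integral_sub (hint a b) (hint a' b')]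
  refine (norm_intervalIntegral_le_integral_of_norm_le (E := ℝ) hφint (fun x ↦ ?_) α β).trans ?_
  · simpa only [Real.norm_eq_abs, φ, sub_sub_sub_cancel_right] using
      abs_exp_neg_sq_div_mul_sub_le hc (a - x) (a' - x) b b' (s x)
  calc ∫ x, φ x
        = |a - a'| / √c * (2 * √(π * (2 * c))) + 4 * |b - b'| / √c * √(π * (2 * c)) := by
        rw [integral_add (by fun_prop) (by fun_prop), integral_const_mul, integral_const_mul,
          integral_add (hG a) (hG a'), integral_exp_neg_sub_sq_div, integral_exp_neg_sub_sq_div]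
        ring
    _ = √(2 * π) * (2 * |a - a'| + 4 * |b - b'|) := by
        rw [hsqrt]; field_simp
    _ ≤ √(2 * π) * (4 * (|a - a'| + |b - b'|)) := by
        have ha := abs_nonneg (a - a')
        gcongr
        linarith
    _ = 4 * √(2 * π) * (|a - a'| + |b - b'|) := by ring

theorem chemotaxis_term_lipschitz_general
    (D R : ℝ) (hD : 0 < D) :
    ∃ L > (0 : ℝ), ∀ h > (0 : ℝ), ∀ a a' b b' : ℝ,
      |(∫ x in (-R)..R,
          Real.exp (-(a - x) ^ 2 / (4 * h * D)) *
            (Real.exp (-(b - Real.sqrt (R ^ 2 - x ^ 2)) ^ 2 / (4 * h * D)) -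
              Real.exp (-(b + Real.sqrt (R ^ 2 - x ^ 2)) ^ 2 / (4 * h * D)))) -
        (∫ x in (-R)..R,
          Real.exp (-(a' - x) ^ 2 / (4 * h * D)) *
            (Real.exp (-(b' - Real.sqrt (R ^ 2 - x ^ 2)) ^ 2 / (4 * h * D)) -
              Real.exp (-(b' + Real.sqrt (R ^ 2 - x ^ 2)) ^ 2 / (4 * h * D))))| ≤
      L * (|a - a'| + |b - b'|) :=
  ⟨4 * √(2 * π), by positivity, fun _ _ a a' b b' ↦
    abs_intervalIntegral_exp_neg_sq_div_mul_sub_le (by positivity) (by fun_prop) _ _ a a' b b'⟩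

/-- **Lipschitz estimate (3.27)** for the building block of the chemotaxis term of the
hybrid alignment–chemotaxis model: the Gaussian integral `F(h,a,b)` is Lipschitz in
`(a,b)` with a constant depending only on `D` and `R`, uniformly in the elapsed time
`h > 0`. -/
theorem chemotaxis_term_lipschitz
    (D R : ℝ) (hD : 0 < D) (hR : 0 < R) (N : ℕ) (hN : 1 ≤ N) :
    ∃ L > (0 : ℝ), ∀ h > (0 : ℝ), ∀ a a' b b' : ℝ,
      |(∫ x in (-R)..R,
          Real.exp (-(a - x) ^ 2 / (4 * h * D)) *
            (Real.exp (-(b - Real.sqrt (R ^ 2 - x ^ 2)) ^ 2 / (4 * h * D)) -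
              Real.exp (-(b + Real.sqrt (R ^ 2 - x ^ 2)) ^ 2 / (4 * h * D)))) -
        (∫ x in (-R)..R,
          Real.exp (-(a' - x) ^ 2 / (4 * h * D)) *
            (Real.exp (-(b' - Real.sqrt (R ^ 2 - x ^ 2)) ^ 2 / (4 * h * D)) -
              Real.exp (-(b' + Real.sqrt (R ^ 2 - x ^ 2)) ^ 2 / (4 * h * D))))| ≤
      L * (|a - a'| + |b - b'|) :=
  chemotaxis_term_lipschitz_general D R hD
end

section
/- Let β > 0, N ∈ ℕ with N ≥ 1, γ, ξ, η, D, R > 0, C̄(z) = γξR² e^{-R²/(4zD) - ηz}/(8z²D²) for z > 0, and g(t) = N ∫₀^t C̄(z) dz. Suppose (V_i, X_i) : [0,∞) → ℝ × ℝ, i = 1, …, N, are C¹ functions satisfying V_i'(t) = (β/N)·Σ_{j=1}^N (V_j(t) - V_i(t)) - ∫₀^t C̄(t-τ)·Σ_{j=1}^N (X_i(t) - X_j(τ)) dτ and X_i'(t) = V_i(t). Define X_CM = (1/N)ΣX_i, V_CM = (1/N)ΣV_i, and the deviations X̄_i = X_i - X_CM, V̄_i = V_i - V_CM. Then for each i the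 deviations satisfy the decoupled planar system V̄_i'(t) = -β·V̄_i(t) - g(t)·X̄_i(t) and X̄_i'(t) = V̄_i(t). -/
/-!
Summed over the particles, the alignment terms cancel, and in the memory term of particle `i`
the `τ`-dependent part `∑ⱼ Xⱼ(τ)` is common to all particles; so subtracting the mean leaves
`N X̄ᵢ(t) ∫₀ᵗ C̄`, i.e. `g(t) X̄ᵢ(t)`. Splitting that integral needs `C̄` integrable near `0`,
which holds because `e^{-a/z} ≤ 2z²/a²` keeps `C̄` bounded.
-/

open MeasureTheory Set Real Finset

theorem exp_neg_div_div_sq_le {a z : ℝ} (ha : 0 < a) (hz : 0 < z) :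
    exp (-a / z) / z ^ 2 ≤ 2 / a ^ 2 := by
  have hquad : (a / z) ^ 2 / 2 ≤ exp (a / z) := by
    simpa using pow_div_factorial_le_exp (x := a / z) (div_pos ha hz).le 2
  rw [neg_div, exp_neg, div_le_div_iff₀ (by positivity) (by positivity),
    inv_mul_le_iff₀ (exp_pos _)]
  calc a ^ 2 = 2 * (z ^ 2 * ((a / z) ^ 2 / 2)) := by field_simp
    _ ≤ 2 * (z ^ 2 * exp (a / z)) := by gcongr
    _ = _ := by ring

theorem intervalIntegrable_of_forall_pos_eq_exp_div_sq {Cb : ℝ → ℝ} {c a η t : ℝ} (ha : 0 < a)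
    (hη : 0 ≤ η) (ht : 0 ≤ t) (hCb : ∀ z > 0, Cb z = c * exp (-a / z - η * z) / z ^ 2) :
    IntervalIntegrable Cb volume 0 t := by
  rw [intervalIntegrable_iff_integrableOn_Ioc_of_le ht]
  have hcont : ContinuousOn Cb (Ioc 0 t) :=
    ContinuousOn.congr (by fun_prop (disch := intro z hz; have := hz.1; positivity))
      fun z hz => hCb z hz.1
  refine IntegrableOn.of_bound measure_Ioc_lt_top (hcont.aestronglyMeasurable measurableSet_Ioc)
    (|c| * (2 / a ^ 2)) ?_
  filter_upwards [ae_restrict_mem measurableSet_Ioc] with z hz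
  have hexp : exp (-a / z - η * z) ≤ exp (-a / z) := by
    gcongr; nlinarith [hz.1]
  rw [hCb z hz.1, norm_div, norm_mul, Real.norm_eq_abs, Real.norm_of_nonneg (exp_pos _).le,
    Real.norm_of_nonneg (by positivity), mul_div_assoc]
  exact mul_le_mul_of_nonneg_left ((div_le_div_of_nonneg_right hexp (by positivity)).trans
    (exp_neg_div_div_sq_le ha hz.1)) (abs_nonneg c)

section Mean

variable {ι : Type*} [Fintype ι]

theorem HasDerivAt.sub_mean {f : ι → ℝ → ℝ} {f' : ι → ℝ} {t : ℝ}
    (hf : ∀ j, HasDerivAt (f j) (f' j) t) (i : ι) :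
    HasDerivAt (fun s => f i s - (1 / Fintype.card ι : ℝ) * ∑ j, f j s)
      (f' i - (1 / Fintype.card ι : ℝ) * ∑ j, f' j) t :=
  (hf i).sub ((HasDerivAt.fun_sum fun j _ => hf j).const_mul _)

theorem sub_mean_affine [Nonempty ι] (u w : ι → ℝ) (p q d : ℝ) (i : ι) :
    (p * u i + q * w i + d) - (1 / Fintype.card ι : ℝ) * ∑ k, (p * u k + q * w k + d) =
      p * (u i - (1 / Fintype.card ι : ℝ) * ∑ k, u k) +
        q * (w i - (1 / Fintype.card ι : ℝ) * ∑ k, w k) := by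
  have : (Fintype.card ι : ℝ) ≠ 0 := by positivity
  simp only [sum_add_distrib, ← mul_sum, sum_const, card_univ, nsmul_eq_mul]
  field_simp
  ring

theorem integral_mul_sum_const_sub {K : ℝ → ℝ} {Y : ι → ℝ → ℝ} {a b : ℝ} (c : ℝ)
    (hK : IntervalIntegrable K volume a b) (hY : ∀ j, ContinuousOn (Y j) (uIcc a b)) :
    ∫ τ in a..b, K τ * ∑ j, (c - Y j τ) =
      Fintype.card ι * c * (∫ τ in a..b, K τ) - ∫ τ in a..b, K τ * ∑ j, Y j τ := by
  have hKY : IntervalIntegrable (fun τ => K τ * ∑ j, Y j τ) volume a b :=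
    hK.mul_continuousOn (continuousOn_finsetSum _ fun j _ => hY j)
  simp only [sum_sub_distrib, sum_const, card_univ, nsmul_eq_mul, mul_sub]
  rw [intervalIntegral.integral_sub (hK.mul_const _) hKY, intervalIntegral.integral_mul_const]
  ring

end Mean

theorem deviation_system_general
    (β : ℝ) (N : ℕ)
    (γ ξ η D R : ℝ) (hη : 0 < η) (hD : 0 < D) (hR : 0 < R)
    (Cb : ℝ → ℝ)
    (hCb : ∀ z > 0, Cb z =
      γ * ξ * R ^ 2 * Real.exp (-R ^ 2 / (4 * z * D) - η * z) / (8 * z ^ 2 * D ^ 2))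
    (g : ℝ → ℝ) (hg : ∀ t, g t = (N : ℝ) * ∫ z in (0 : ℝ)..t, Cb z)
    (V X : Fin N → ℝ → ℝ)
    (hV : ∀ i, ∀ t ≥ (0 : ℝ), HasDerivAt (V i)
      ((β / N) * ∑ j : Fin N, (V j t - V i t) -
        ∫ τ in (0 : ℝ)..t, Cb (t - τ) * ∑ j : Fin N, (X i t - X j τ)) t)
    (hX : ∀ i, ∀ t ≥ (0 : ℝ), HasDerivAt (X i) (V i t) t) :
    ∀ i, ∀ t ≥ (0 : ℝ),
      HasDerivAt (fun s => V i s - (1 / N : ℝ) * ∑ j : Fin N, V j s)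
        (-β * (V i t - (1 / N : ℝ) * ∑ j : Fin N, V j t) -
          g t * (X i t - (1 / N : ℝ) * ∑ j : Fin N, X j t)) t ∧
      HasDerivAt (fun s => X i s - (1 / N : ℝ) * ∑ j : Fin N, X j s)
        (V i t - (1 / N : ℝ) * ∑ j : Fin N, V j t) t := by
  intro i t ht
  have : Nonempty (Fin N) := ⟨i⟩
  have hN : (N : ℝ) ≠ 0 := by simpa using Fin.pos i |>.ne'
  have hCb_int : IntervalIntegrable Cb volume 0 t :=
    intervalIntegrable_of_forall_pos_eq_exp_div_sq (c := γ * ξ * R ^ 2 / (8 * D ^ 2))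
      (a := R ^ 2 / (4 * D)) (by positivity) hη.le ht fun z hz => by rw [hCb z hz]; ring_nf
  have hK : IntervalIntegrable (fun τ => Cb (t - τ)) volume 0 t := by
    simpa using (hCb_int.comp_sub_left t).symm
  have hK_int : ∫ τ in (0 : ℝ)..t, Cb (t - τ) = ∫ z in (0 : ℝ)..t, Cb z := by
    simp [intervalIntegral.integral_comp_sub_left]
  have hXc : ∀ j, ContinuousOn (X j) (uIcc 0 t) := fun j τ hτ =>
    (hX j τ (by rw [uIcc_of_le ht] at hτ; exact hτ.1)).continuousAt.continuousWithinAt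
  set J := ∫ τ in (0 : ℝ)..t, Cb (t - τ) * ∑ j, X j τ
  have hA : ∀ k, (β / N) * ∑ j, (V j t - V k t) -
      ∫ τ in (0 : ℝ)..t, Cb (t - τ) * ∑ j, (X k t - X j τ) =
        -β * V k t + -(N * ∫ z in (0 : ℝ)..t, Cb z) * X k t + ((β / N) * ∑ j, V j t + J) := by
    intro k
    rw [integral_mul_sum_const_sub (X k t) hK hXc, hK_int, Fintype.card_fin,
      sum_sub_distrib, sum_const, card_univ, Fintype.card_fin, nsmul_eq_mul]
    field_simp
    ring
  refine ⟨?_, by simpa using HasDerivAt.sub_mean (fun j => hX j t ht) i⟩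
  have hVbar := HasDerivAt.sub_mean (fun j => hV j t ht) i
  simp only [hA] at hVbar
  simp only [sub_mean_affine (fun k => V k t) (fun k => X k t)] at hVbar
  rw [Fintype.card_fin] at hVbar
  convert hVbar using 1
  rw [hg]
  ring

/-- **Reduction to the decoupled planar system (5.23)–(5.24)**: in the variables
relative to the centre of mass, the linearized alignment–chemotaxis system becomes,
for each particle, `V̄' = -βV̄ - g(t)X̄`, `X̄' = V̄`, where `g(t) = N∫₀ᵗ C̄(z)dz`. -/
theorem deviation_system
    (β : ℝ) (hβ : 0 < β) (N : ℕ) (hN : 1 ≤ N)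
    (γ ξ η D R : ℝ) (hγ : 0 < γ) (hξ : 0 < ξ) (hη : 0 < η) (hD : 0 < D) (hR : 0 < R)
    (Cb : ℝ → ℝ)
    (hCb : ∀ z > 0, Cb z =
      γ * ξ * R ^ 2 * Real.exp (-R ^ 2 / (4 * z * D) - η * z) / (8 * z ^ 2 * D ^ 2))
    (g : ℝ → ℝ) (hg : ∀ t, g t = (N : ℝ) * ∫ z in (0 : ℝ)..t, Cb z)
    (V X : Fin N → ℝ → ℝ)
    (hV : ∀ i, ∀ t ≥ (0 : ℝ), HasDerivAt (V i)
      ((β / N) * ∑ j : Fin N, (V j t - V i t) -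
        ∫ τ in (0 : ℝ)..t, Cb (t - τ) * ∑ j : Fin N, (X i t - X j τ)) t)
    (hX : ∀ i, ∀ t ≥ (0 : ℝ), HasDerivAt (X i) (V i t) t) :
    ∀ i, ∀ t ≥ (0 : ℝ),
      HasDerivAt (fun s => V i s - (1 / N : ℝ) * ∑ j : Fin N, V j s)
        (-β * (V i t - (1 / N : ℝ) * ∑ j : Fin N, V j t) -
          g t * (X i t - (1 / N : ℝ) * ∑ j : Fin N, X j t)) t ∧
      HasDerivAt (fun s => X i s - (1 / N : ℝ) * ∑ j : Fin N, X j s)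
        (V i t - (1 / N : ℝ) * ∑ j : Fin N, V j t) t :=
  deviation_system_general β N γ ξ η D R hη hD hR Cb hCb g hg V X hV hX
end

section
/- Let d = 4N for an integer N ≥ 1, β, γ, ξ, η, D > 0, C(z) = γξ e^{-ηz}/(4πDz) for z > 0, M = ∫₀^∞ C(z)√(4Dz) dz, and M̄ > 0. Suppose q : ℝ^d → ℝ^d satisfies ‖q(y)‖ ≤ √(2N(4β²+1))·‖y‖ for all y, and p : (0,∞) × ℝ^d × ℝ^d → ℝ^d satisfies ‖p(h, u, v)‖ ≤ M̄√(2N)·√(4Dh) for all h > 0, u, v ∈ ℝ^d. If y : [0,T) → ℝ^d is a continuous solution of y(t) = y₀ + ∫₀^t [q(y(τ)) + ∫_τ^t C(s-τ) p(s-τ, y(s), y(τ)) ds] dτ, then for all t ∈ [0,T): ‖y(t)‖ ≤ (‖y₀‖ + M·M̄·√(2N)·T) · e^{t·√(2N(4β²+1))}. -/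
/-!
The memory term is bounded uniformly in time: its integrand is dominated by a translate of the
integrable kernel `C z * √(4 D z) * M̄ √(2N)`, whose total mass is `K = M M̄ √(2N)`. Hence
`‖y t‖ ≤ ‖y₀‖ + K T + ∫₀ᵗ L ‖y τ‖ dτ` with `L = √(2N(4β² + 1))`, and the integral form of
Grönwall's inequality gives `‖y t‖ ≤ (‖y₀‖ + K T) e^{L t}`.
-/

open MeasureTheory Set Real

theorem le_mul_exp_of_le_add_integral {u : ℝ → ℝ} {a b c L : ℝ}
    (hu : ContinuousOn u (Icc a b)) (hL : 0 ≤ L)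
    (h : ∀ t ∈ Icc a b, u t ≤ c + ∫ τ in a..t, L * u τ) :
    ∀ t ∈ Icc a b, u t ≤ c * exp (L * (t - a)) := by
  intro t ht
  have hab : a ≤ b := ht.1.trans ht.2
  set v := IccExtend hab ((Icc a b).domRestrict u)
  have hv : Continuous v := hu.domRestrict.Icc_extend'
  have hvu : ∀ s ∈ Icc a b, v s = u s := fun s hs => IccExtend_of_mem _ _ hs
  -- Extending `u` off `[a, b]` makes the right-hand side of `h` differentiable on all of `ℝ`.
  set F : ℝ → ℝ := fun s => c + ∫ τ in a..s, L * v τ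
  have hF : ∀ s, HasDerivAt F (L * v s) s := fun s =>
    ((hv.const_mul L).integral_hasStrictDerivAt a s).hasDerivAt.const_add c
  have hu_le_F : ∀ s ∈ Icc a b, u s ≤ F s := by
    intro s hs
    have hvu_int : ∫ τ in a..s, L * v τ = ∫ τ in a..s, L * u τ := by
      refine intervalIntegral.integral_congr fun τ hτ => ?_
      rw [uIcc_of_le hs.1] at hτ
      rw [hvu τ ⟨hτ.1, hτ.2.trans hs.2⟩]
    simpa only [F, hvu_int] using h s hs
  have hF_le := le_gronwallBound_of_liminf_deriv_right_le (f := F) (f' := fun s => L * v s)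
    (δ := c) (K := L) (ε := 0)
    (fun s _ => (hF s).continuousAt.continuousWithinAt)
    (fun s _ _ hr => (hF s).hasDerivWithinAt.liminf_right_slope_le hr)
    (by simp [F])
    (fun s hs => by
      rw [add_zero, hvu s (Ico_subset_Icc_self hs)]
      exact mul_le_mul_of_nonneg_left (hu_le_F s (Ico_subset_Icc_self hs)) hL)
    t ht
  rw [gronwallBound_ε0] at hF_le
  exact (hu_le_F t ht).trans hF_le

theorem norm_intervalIntegral_le_of_norm_le_comp_sub {E : Type*} [NormedAddCommGroup E]
    [NormedSpace ℝ E] {f : ℝ → E} {g : ℝ → ℝ} {τ t : ℝ}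
    (hg : IntegrableOn g (Ioi 0)) (hg0 : ∀ z ∈ Ioi (0 : ℝ), 0 ≤ g z) (hτt : τ ≤ t)
    (hf : ∀ s ∈ Ioc τ t, ‖f s‖ ≤ g (s - τ)) :
    ‖∫ s in τ..t, f s‖ ≤ ∫ z in Ioi 0, g z := by
  have hg_int : IntervalIntegrable g volume 0 (t - τ) :=
    (intervalIntegrable_iff_integrableOn_Ioc_of_le (sub_nonneg.2 hτt)).2
      (hg.mono_set Ioc_subset_Ioi_self)
  calc ‖∫ s in τ..t, f s‖ ≤ ∫ s in τ..t, g (s - τ) :=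
        intervalIntegral.norm_integral_le_of_norm_le hτt (ae_of_all _ hf)
          (by simpa using hg_int.comp_sub_right τ)
    _ = ∫ z in Ioc 0 (t - τ), g z := by
        rw [intervalIntegral.integral_comp_sub_right g τ, sub_self,
          intervalIntegral.integral_of_le (sub_nonneg.2 hτt)]
    _ ≤ ∫ z in Ioi 0, g z :=
        setIntegral_mono_set hg ((ae_restrict_mem measurableSet_Ioi).mono hg0)
          Ioc_subset_Ioi_self.eventuallyLE

theorem norm_add_intervalIntegral_le {E : Type*} [NormedAddCommGroup E] [NormedSpace ℝ E]
    {Φ : ℝ → E} {w : ℝ → ℝ} {a t K : ℝ} (x : E) (hat : a ≤ t) (hw : ContinuousOn w (Icc a t))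
    (hΦ : ∀ τ ∈ Ioc a t, ‖Φ τ‖ ≤ w τ + K) :
    ‖x + ∫ τ in a..t, Φ τ‖ ≤ ‖x‖ + K * (t - a) + ∫ τ in a..t, w τ := by
  have hw_int : IntervalIntegrable w volume a t := hw.intervalIntegrable_of_Icc hat
  calc ‖x + ∫ τ in a..t, Φ τ‖ ≤ ‖x‖ + ‖∫ τ in a..t, Φ τ‖ := norm_add_le _ _
    _ ≤ ‖x‖ + ∫ τ in a..t, (w τ + K) := by
        gcongr
        exact intervalIntegral.norm_integral_le_of_norm_le hat (ae_of_all _ hΦ)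
          (hw_int.add intervalIntegrable_const)
    _ = ‖x‖ + K * (t - a) + ∫ τ in a..t, w τ := by
        rw [intervalIntegral.integral_add hw_int intervalIntegrable_const,
          intervalIntegral.integral_const, smul_eq_mul]
        ring

section ChemotaxisKernel

variable {C : ℝ → ℝ} {γ ξ η D : ℝ}

theorem chemotaxisKernel_nonneg (hγ : 0 ≤ γ) (hξ : 0 ≤ ξ) (hD : 0 ≤ D)
    (hC : ∀ z > 0, C z = γ * ξ * exp (-η * z) / (4 * π * D * z)) {z : ℝ} (hz : 0 < z) :
    0 ≤ C z := by
  rw [hC z hz]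
  positivity

theorem integrableOn_chemotaxisKernel_mul_sqrt (hη : 0 < η) (hD : 0 < D)
    (hC : ∀ z > 0, C z = γ * ξ * exp (-η * z) / (4 * π * D * z)) :
    IntegrableOn (fun z => C z * √(4 * D * z)) (Ioi 0) := by
  -- `C z * √(4 D z)` is a constant multiple of `z ^ (-1/2) * exp (-η z)`.
  have h := (integrableOn_rpow_mul_exp_neg_mul_rpow (s := -(1 / 2)) (p := 1) (b := η)
    (by norm_num) one_pos hη).const_mul (γ * ξ * √(4 * D) / (4 * π * D))
  refine IntegrableOn.congr_fun h (fun z (hz : 0 < z) => ?_) measurableSet_Ioi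
  have hsqrt : √z * √z = z := mul_self_sqrt hz.le
  rw [hC z hz, sqrt_mul (by positivity) z, rpow_one, rpow_neg hz.le, ← sqrt_eq_rpow]
  have hD' : D ≠ 0 := hD.ne'
  field_simp
  linear_combination (γ * ξ) * hsqrt.symm

end ChemotaxisKernel

theorem a_priori_bound_general
    (N : ℕ)
    (β γ ξ η D : ℝ) (hγ : 0 < γ) (hξ : 0 < ξ) (hη : 0 < η) (hD : 0 < D)
    (C : ℝ → ℝ) (hC : ∀ z > 0, C z = γ * ξ * Real.exp (-η * z) / (4 * Real.pi * D * z))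
    (M : ℝ) (hM : M = ∫ z in Set.Ioi (0 : ℝ), C z * Real.sqrt (4 * D * z))
    (Mbar : ℝ) (hMbar : 0 < Mbar)
    (q : EuclideanSpace ℝ (Fin (4 * N)) → EuclideanSpace ℝ (Fin (4 * N)))
    (hqgrowth : ∀ y : EuclideanSpace ℝ (Fin (4 * N)),
      ‖q y‖ ≤ Real.sqrt (2 * N * (4 * β ^ 2 + 1)) * ‖y‖)
    (p : ℝ → EuclideanSpace ℝ (Fin (4 * N)) → EuclideanSpace ℝ (Fin (4 * N)) →
      EuclideanSpace ℝ (Fin (4 * N)))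
    (hpBound : ∀ h > (0 : ℝ), ∀ u v : EuclideanSpace ℝ (Fin (4 * N)),
      ‖p h u v‖ ≤ Mbar * Real.sqrt (2 * N) * Real.sqrt (4 * D * h))
    (y₀ : EuclideanSpace ℝ (Fin (4 * N))) (T : ℝ)
    (y : ℝ → EuclideanSpace ℝ (Fin (4 * N)))
    (hy : ContinuousOn y (Set.Ico 0 T))
    (heq : ∀ t ∈ Set.Ico (0 : ℝ) T,
      y t = y₀ + ∫ τ in (0 : ℝ)..t,
        (q (y τ) + ∫ s in τ..t, C (s - τ) • p (s - τ) (y s) (y τ))) :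
    ∀ t ∈ Set.Ico (0 : ℝ) T,
      ‖y t‖ ≤ (‖y₀‖ + M * Mbar * Real.sqrt (2 * N) * T) *
        Real.exp (t * Real.sqrt (2 * N * (4 * β ^ 2 + 1))) := by
  intro t₀ ht₀
  set L := √(2 * N * (4 * β ^ 2 + 1))
  set K := M * Mbar * √(2 * N)
  have hC0 : ∀ z > 0, 0 ≤ C z := fun z => chemotaxisKernel_nonneg hγ.le hξ.le hD.le hC
  have hK0 : 0 ≤ K := by
    have : 0 ≤ M := hM ▸ setIntegral_nonneg measurableSet_Ioi fun z hz => by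
      have := hC0 z hz; positivity
    positivity
  have hmemory : ∀ τ t, τ ≤ t → ‖∫ s in τ..t, C (s - τ) • p (s - τ) (y s) (y τ)‖ ≤ K := by
    intro τ t hτt
    convert norm_intervalIntegral_le_of_norm_le_comp_sub
      (g := fun z => C z * √(4 * D * z) * (Mbar * √(2 * N)))
      ((integrableOn_chemotaxisKernel_mul_sqrt hη hD hC).mul_const _)
      (fun z hz => by have := hC0 z hz; positivity) hτt (fun s hs => ?_) using 1
    · rw [integral_mul_const, ← hM]; ring
    have hsτ : 0 < s - τ := sub_pos.2 hs.1
    rw [norm_smul, Real.norm_of_nonneg (hC0 _ hsτ)]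
    linarith [mul_le_mul_of_nonneg_left (hpBound _ hsτ (y s) (y τ)) (hC0 _ hsτ)]
  have hIcc : Icc 0 t₀ ⊆ Ico 0 T := Icc_subset_Ico_right ht₀.2
  have hnorm_le : ∀ t ∈ Icc 0 t₀, ‖y t‖ ≤ ‖y₀‖ + K * T + ∫ τ in 0..t, L * ‖y τ‖ := by
    intro t ht
    rw [heq t (hIcc ht)]
    refine (norm_add_intervalIntegral_le (w := fun τ => L * ‖y τ‖) y₀ ht.1
      (continuousOn_const.mul ((hy.mono ((Icc_subset_Icc_right ht.2).trans hIcc)).norm))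
      fun τ hτ => (norm_add_le _ _).trans (add_le_add (hqgrowth _) (hmemory τ t hτ.2))).trans ?_
    gcongr
    linarith [ht.2, ht₀.2]
  simpa only [sub_zero, mul_comm _ t₀] using
    le_mul_exp_of_le_add_integral (hy.mono hIcc).norm (sqrt_nonneg _) hnorm_le t₀ ⟨ht₀.1, le_rfl⟩

/-- **A priori bound** from the proof of the global existence theorem (Theorem 4.2) of
the hybrid alignment–chemotaxis model: any continuous solution of the delayed Volterra
integral equation on `[0,T)` satisfies the Gronwall-type exponential bound. -/
theorem a_priori_bound
    (N : ℕ) (hN : 1 ≤ N)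
    (β γ ξ η D : ℝ) (hβ : 0 < β) (hγ : 0 < γ) (hξ : 0 < ξ) (hη : 0 < η) (hD : 0 < D)
    (C : ℝ → ℝ) (hC : ∀ z > 0, C z = γ * ξ * Real.exp (-η * z) / (4 * Real.pi * D * z))
    (M : ℝ) (hM : M = ∫ z in Set.Ioi (0 : ℝ), C z * Real.sqrt (4 * D * z))
    (Mbar : ℝ) (hMbar : 0 < Mbar)
    (q : EuclideanSpace ℝ (Fin (4 * N)) → EuclideanSpace ℝ (Fin (4 * N)))
    (hqgrowth : ∀ y : EuclideanSpace ℝ (Fin (4 * N)),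
      ‖q y‖ ≤ Real.sqrt (2 * N * (4 * β ^ 2 + 1)) * ‖y‖)
    (p : ℝ → EuclideanSpace ℝ (Fin (4 * N)) → EuclideanSpace ℝ (Fin (4 * N)) →
      EuclideanSpace ℝ (Fin (4 * N)))
    (hpBound : ∀ h > (0 : ℝ), ∀ u v : EuclideanSpace ℝ (Fin (4 * N)),
      ‖p h u v‖ ≤ Mbar * Real.sqrt (2 * N) * Real.sqrt (4 * D * h))
    (y₀ : EuclideanSpace ℝ (Fin (4 * N))) (T : ℝ) (hT : 0 < T)
    (y : ℝ → EuclideanSpace ℝ (Fin (4 * N)))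
    (hy : ContinuousOn y (Set.Ico 0 T))
    (heq : ∀ t ∈ Set.Ico (0 : ℝ) T,
      y t = y₀ + ∫ τ in (0 : ℝ)..t,
        (q (y τ) + ∫ s in τ..t, C (s - τ) • p (s - τ) (y s) (y τ))) :
    ∀ t ∈ Set.Ico (0 : ℝ) T,
      ‖y t‖ ≤ (‖y₀‖ + M * Mbar * Real.sqrt (2 * N) * T) *
        Real.exp (t * Real.sqrt (2 * N * (4 * β ^ 2 + 1))) :=
  a_priori_bound_general N β γ ξ η D hγ hξ hη hD C hC M hM Mbar hMbar q hqgrowth p hpBound y₀ T y hy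
    heq
end

section
/- Let d ∈ ℕ, t̄ ∈ ℝ, and let k₁, k₂, k₃ > 0. Suppose y : [t̄, ∞) → ℝ^d is differentiable and U : [t̄, ∞) → ℝ is a differentiable function satisfying k₂·‖y(t)‖² ≤ U(t) ≤ k₁·‖y(t)‖² and U'(t) ≤ -k₃·‖y(t)‖² for all t ≥ t̄. Then for all t ≥ t̄: ‖y(t)‖ ≤ √(k₁/k₂) · ‖y(t̄)‖ · e^{-(k₃/(2k₁))·(t - t̄)}. -/
/-!
Since `U ≤ k₁‖y‖²`, the decay hypothesis gives the linear differential inequality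
`U' ≤ -(k₃/k₁) U`, so Grönwall's inequality bounds `U(t)` by `U(t̄) e^{-(k₃/k₁)(t - t̄)}`.
Squeezing with `k₂‖y‖² ≤ U` on the left and `U(t̄) ≤ k₁‖y(t̄)‖²` on the right and taking
square roots gives the claim.
-/

open Real Set

theorem le_mul_exp_of_hasDerivAt_le_neg_mul {f f' : ℝ → ℝ} {a c : ℝ}
    (hf : ∀ t ≥ a, HasDerivAt f (f' t) t) (hbound : ∀ t ≥ a, f' t ≤ -c * f t) :
    ∀ t ≥ a, f t ≤ f a * exp (-c * (t - a)) := by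
  intro t ht
  have hcont : ContinuousOn f (Icc a t) := fun s hs => (hf s hs.1).continuousAt.continuousWithinAt
  have := le_gronwallBound_of_liminf_deriv_right_le (K := -c) (ε := 0) hcont
    (fun s hs _ hr => (hf s hs.1).hasDerivWithinAt.liminf_right_slope_le hr) le_rfl
    (fun s hs => by simpa using hbound s hs.1) t ⟨ht, le_rfl⟩
  rwa [gronwallBound_ε0] at this

theorem le_sqrt_div_mul_abs_mul_of_mul_sq_le {a b k₁ k₂ e : ℝ} (hk₂ : 0 < k₂) (he : 0 ≤ e)
    (h : k₂ * a ^ 2 ≤ k₁ * b ^ 2 * e ^ 2) : a ≤ √(k₁ / k₂) * |b| * e := by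
  have hsq : a ^ 2 ≤ k₁ / k₂ * b ^ 2 * e ^ 2 := by
    calc a ^ 2 = k₂ * a ^ 2 / k₂ := by field_simp
      _ ≤ k₁ * b ^ 2 * e ^ 2 / k₂ := by gcongr
      _ = k₁ / k₂ * b ^ 2 * e ^ 2 := by ring
  calc a ≤ |a| := le_abs_self a
    _ ≤ √(k₁ / k₂ * b ^ 2 * e ^ 2) := abs_le_sqrt hsq
    _ = √(k₁ / k₂) * |b| * e := by
      rw [sqrt_mul' _ (sq_nonneg e), sqrt_mul' _ (sq_nonneg b), sqrt_sq he, sqrt_sq_eq_abs]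

theorem lyapunov_decay_lemma_general
    (d : ℕ) (tb : ℝ) (k₁ k₂ k₃ : ℝ) (hk₁ : 0 < k₁) (hk₂ : 0 < k₂) (hk₃ : 0 < k₃)
    (y : ℝ → EuclideanSpace ℝ (Fin d))
    (U U' : ℝ → ℝ) (hU : ∀ t ≥ tb, HasDerivAt U (U' t) t)
    (hlow : ∀ t ≥ tb, k₂ * ‖y t‖ ^ 2 ≤ U t)
    (hhigh : ∀ t ≥ tb, U t ≤ k₁ * ‖y t‖ ^ 2)
    (hdec : ∀ t ≥ tb, U' t ≤ -k₃ * ‖y t‖ ^ 2) :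
    ∀ t ≥ tb, ‖y t‖ ≤
      Real.sqrt (k₁ / k₂) * ‖y tb‖ * Real.exp (-(k₃ / (2 * k₁)) * (t - tb)) := by
  intro t ht
  have hlin : ∀ s ≥ tb, U' s ≤ -(k₃ / k₁) * U s := fun s hs =>
    calc U' s ≤ -k₃ * ‖y s‖ ^ 2 := hdec s hs
      _ = -(k₃ / k₁) * (k₁ * ‖y s‖ ^ 2) := by field_simp
      _ ≤ -(k₃ / k₁) * U s :=
        mul_le_mul_of_nonpos_left (hhigh s hs) (neg_nonpos.2 (div_pos hk₃ hk₁).le)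
  have hexp : exp (-(k₃ / (2 * k₁)) * (t - tb)) ^ 2 = exp (-(k₃ / k₁) * (t - tb)) := by
    rw [sq, ← exp_add]
    congr 1
    field_simp
    ring
  have hsq : k₂ * ‖y t‖ ^ 2 ≤ k₁ * ‖y tb‖ ^ 2 * exp (-(k₃ / (2 * k₁)) * (t - tb)) ^ 2 := by
    rw [hexp]
    calc k₂ * ‖y t‖ ^ 2 ≤ U t := hlow t ht
      _ ≤ U tb * exp (-(k₃ / k₁) * (t - tb)) := le_mul_exp_of_hasDerivAt_le_neg_mul hU hlin t ht
      _ ≤ k₁ * ‖y tb‖ ^ 2 * exp (-(k₃ / k₁) * (t - tb)) := by gcongr; exact hhigh tb le_rfl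
  simpa using le_sqrt_div_mul_abs_mul_of_mul_sq_le hk₂ (exp_pos _).le hsq

/-- **Quantitative Lyapunov decay lemma** (proof of Theorem 5.2): if a differentiable
function `U` along a trajectory `y` satisfies `k₂‖y‖² ≤ U ≤ k₁‖y‖²` and
`U' ≤ -k₃‖y‖²` on `[t̄,∞)`, then `‖y(t)‖ ≤ √(k₁/k₂)‖y(t̄)‖ e^{-(k₃/(2k₁))(t-t̄)}`. -/
theorem lyapunov_decay_lemma
    (d : ℕ) (tb : ℝ) (k₁ k₂ k₃ : ℝ) (hk₁ : 0 < k₁) (hk₂ : 0 < k₂) (hk₃ : 0 < k₃)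
    (y : ℝ → EuclideanSpace ℝ (Fin d)) (hy : ∀ t ≥ tb, DifferentiableAt ℝ y t)
    (U U' : ℝ → ℝ) (hU : ∀ t ≥ tb, HasDerivAt U (U' t) t)
    (hlow : ∀ t ≥ tb, k₂ * ‖y t‖ ^ 2 ≤ U t)
    (hhigh : ∀ t ≥ tb, U t ≤ k₁ * ‖y t‖ ^ 2)
    (hdec : ∀ t ≥ tb, U' t ≤ -k₃ * ‖y t‖ ^ 2) :
    ∀ t ≥ tb, ‖y t‖ ≤
      Real.sqrt (k₁ / k₂) * ‖y tb‖ * Real.exp (-(k₃ / (2 * k₁)) * (t - tb)) :=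
  lyapunov_decay_lemma_general d tb k₁ k₂ k₃ hk₁ hk₂ hk₃ y U U' hU hlow hhigh hdec
end
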